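/- arXiv:math/0111098 — 3 statements merged into one kernel-verified Lean document; each statement's English description precedes it below -/
import Mathlib

section
/- For real δ with 0 < δ < 1 and p > 2, there is a constant c such that ∫_{|u|<1} |u|^{-(2-δ p/(p-1))} |z-u|^{-p/(p-1)} dA(u) ≤ c · |z|^{-(1-δ)p/(p-1)} for all z with 0 < |z| < 1. -/
open MeasureTheory Metric Set
open scoped ENNReal NNReal

private lemma kernel_vol_cball (r : ℝ) (hr : 0 ≤ r) :
    volume (closedBall (0:ℂ) r) = ENNReal.ofReal (Real.pi * r ^ 2) := by
  rw [Complex.volume_closedBall, ← ENNReal.ofReal_pow hr,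
    show ((NNReal.pi : ℝ≥0∞)) = ENNReal.ofReal Real.pi by
      rw [← NNReal.coe_real_pi, ENNReal.ofReal_coe_nnreal],
    ← ENNReal.ofReal_mul (by positivity)]
  congr 1; ring

private lemma kernel_vol_ball (r : ℝ) (hr : 0 ≤ r) :
    volume (ball (0:ℂ) r) = ENNReal.ofReal (Real.pi * r ^ 2) := by
  rw [Complex.volume_ball, ← ENNReal.ofReal_pow hr,
    show ((NNReal.pi : ℝ≥0∞)) = ENNReal.ofReal Real.pi by
      rw [← NNReal.coe_real_pi, ENNReal.ofReal_coe_nnreal],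
    ← ENNReal.ofReal_mul (by positivity)]
  congr 1; ring

private lemma kernel_meas_set (t s : ℝ) : MeasurableSet {a : ℂ | s ≤ ‖a‖ ^ t} :=
  measurableSet_le measurable_const (by fun_prop)

/-- The superlevel set of `‖·‖ ^ t` (for `t < 0`) is contained in a closed ball. -/
private lemma kernel_meas_le (t s : ℝ) (ht0 : t < 0) (hs : 0 < s) (S : Set ℂ) :
    (volume.restrict S) {a : ℂ | s ≤ ‖a‖ ^ t}
      ≤ ENNReal.ofReal (Real.pi * s ^ (t⁻¹ * 2)) := by
  have hsub : {a : ℂ | s ≤ ‖a‖ ^ t} ⊆ closedBall 0 (s ^ t⁻¹) := by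
    intro u hu
    simp only [mem_setOf_eq] at hu
    rcases eq_or_ne u 0 with rfl | hu0
    · rw [norm_zero, Real.zero_rpow ht0.ne] at hu; linarith
    · have h0 : 0 < ‖u‖ := norm_pos_iff.mpr hu0
      rw [mem_closedBall_zero_iff]
      exact (Real.le_rpow_inv_iff_of_neg h0 hs ht0).mpr hu
  calc (volume.restrict S) {a : ℂ | s ≤ ‖a‖ ^ t}
      ≤ volume {a : ℂ | s ≤ ‖a‖ ^ t} := Measure.restrict_le_self _
    _ ≤ volume (closedBall (0:ℂ) (s ^ t⁻¹)) := measure_mono hsub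
    _ = ENNReal.ofReal (Real.pi * (s ^ t⁻¹) ^ 2) :=
        kernel_vol_cball _ (Real.rpow_nonneg hs.le _)
    _ = ENNReal.ofReal (Real.pi * s ^ (t⁻¹ * 2)) := by
        congr 1
        rw [← Real.rpow_natCast (s ^ t⁻¹) 2, ← Real.rpow_mul hs.le]
        norm_num

/-- Radial integral over a ball in `ℂ` for exponent in `(-2, 0)`. -/
private lemma kernel_lint_ball (t R : ℝ) (ht2 : -2 < t) (ht0 : t < 0) (hR : 0 < R) :
    ∫⁻ u in ball (0:ℂ) R, ENNReal.ofReal (‖u‖ ^ t)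
      ≤ ENNReal.ofReal ((Real.pi + Real.pi * (-t / (t + 2))) * R ^ (t + 2)) := by
  have ht0' : t ≠ 0 := ht0.ne
  have ht2' : (0:ℝ) < t + 2 := by linarith
  have hmeas : Measurable fun u : ℂ => ‖u‖ ^ t := by fun_prop
  rw [lintegral_eq_lintegral_meas_le _
    (ae_of_all _ fun u => Real.rpow_nonneg (norm_nonneg u) t) hmeas.aemeasurable]
  have hT : 0 < R ^ t := Real.rpow_pos_of_pos hR t
  have h1 : (∫⁻ s in Ioc 0 (R ^ t), (volume.restrict (ball (0:ℂ) R)) {a | s ≤ ‖a‖ ^ t})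
      ≤ ENNReal.ofReal (Real.pi * R ^ 2 * R ^ t) := by
    have hb : ∀ s : ℝ, (volume.restrict (ball (0:ℂ) R)) {a | s ≤ ‖a‖ ^ t}
        ≤ ENNReal.ofReal (Real.pi * R ^ 2) := fun s => by
      rw [Measure.restrict_apply (kernel_meas_set t s), ← kernel_vol_ball R hR.le]
      exact measure_mono inter_subset_right
    calc (∫⁻ s in Ioc 0 (R ^ t), (volume.restrict (ball (0:ℂ) R)) {a | s ≤ ‖a‖ ^ t})
        ≤ ∫⁻ _ in Ioc 0 (R ^ t), ENNReal.ofReal (Real.pi * R ^ 2) :=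
          lintegral_mono fun s => hb s
      _ = ENNReal.ofReal (Real.pi * R ^ 2) * volume (Ioc 0 (R ^ t)) := setLIntegral_const _ _
      _ = ENNReal.ofReal (Real.pi * R ^ 2 * R ^ t) := by
          rw [Real.volume_Ioc, sub_zero, ← ENNReal.ofReal_mul (by positivity)]
  have hq : t⁻¹ * 2 < -1 := by
    rw [inv_mul_eq_div, div_lt_iff_of_neg ht0]; linarith
  have h2 : (∫⁻ s in Ioi (R ^ t), (volume.restrict (ball (0:ℂ) R)) {a | s ≤ ‖a‖ ^ t})
      ≤ ENNReal.ofReal (Real.pi * (-t / (t + 2)) * R ^ (t + 2)) := by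
    calc (∫⁻ s in Ioi (R ^ t), (volume.restrict (ball (0:ℂ) R)) {a | s ≤ ‖a‖ ^ t})
        ≤ ∫⁻ s in Ioi (R ^ t), ENNReal.ofReal (Real.pi * s ^ (t⁻¹ * 2)) :=
          setLIntegral_mono' measurableSet_Ioi fun s hs =>
            kernel_meas_le t s ht0 (hT.trans hs) _
      _ = ENNReal.ofReal (∫ s in Ioi (R ^ t), Real.pi * s ^ (t⁻¹ * 2)) := by
          rw [← ofReal_integral_eq_lintegral_ofReal]
          · exact (integrableOn_Ioi_rpow_of_lt hq hT).const_mul _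
          · filter_upwards [ae_restrict_mem measurableSet_Ioi] with s hs
            exact mul_nonneg Real.pi_nonneg (Real.rpow_nonneg (hT.trans hs).le _)
      _ ≤ ENNReal.ofReal (Real.pi * (-t / (t + 2)) * R ^ (t + 2)) := by
          apply ENNReal.ofReal_le_ofReal
          have hs1 : t * (t⁻¹ * 2 + 1) = t + 2 := by
            field_simp
            ring
          have hs2 : t⁻¹ * 2 + 1 = (t + 2) / t := by
            field_simp
            ring
          rw [integral_const_mul, integral_Ioi_rpow_of_lt hq hT,
            ← Real.rpow_mul hR.le, hs1, hs2]
          apply le_of_eq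
          rw [div_div_eq_mul_div]
          ring
  calc (∫⁻ s in Ioi 0, (volume.restrict (ball (0:ℂ) R)) {a | s ≤ ‖a‖ ^ t})
      ≤ ∫⁻ s in Ioc 0 (R ^ t) ∪ Ioi (R ^ t),
          (volume.restrict (ball (0:ℂ) R)) {a | s ≤ ‖a‖ ^ t} := by
        apply lintegral_mono_set
        intro s hs
        rcases le_or_gt s (R ^ t) with h | h
        · exact Or.inl ⟨hs, h⟩
        · exact Or.inr h
    _ ≤ (∫⁻ s in Ioc 0 (R ^ t), (volume.restrict (ball (0:ℂ) R)) {a | s ≤ ‖a‖ ^ t})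
        + ∫⁻ s in Ioi (R ^ t), (volume.restrict (ball (0:ℂ) R)) {a | s ≤ ‖a‖ ^ t} :=
        lintegral_union_le _ _ _
    _ ≤ ENNReal.ofReal (Real.pi * R ^ 2 * R ^ t)
        + ENNReal.ofReal (Real.pi * (-t / (t + 2)) * R ^ (t + 2)) := add_le_add h1 h2
    _ = ENNReal.ofReal ((Real.pi + Real.pi * (-t / (t + 2))) * R ^ (t + 2)) := by
        rw [← ENNReal.ofReal_add (by positivity)
          (mul_nonneg (mul_nonneg Real.pi_nonneg
            (div_nonneg (by linarith) (by linarith))) (Real.rpow_nonneg hR.le _))]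
        congr 1
        rw [← Real.rpow_natCast R 2, mul_assoc, ← Real.rpow_add hR,
          show ((2:ℕ):ℝ) + t = t + 2 by push_cast; ring]
        ring

/-- Radial integral over the complement of a ball in `ℂ` for exponent `< -2`. -/
private lemma kernel_lint_compl (t r : ℝ) (ht : t < -2) (hr : 0 < r) :
    ∫⁻ u in (ball (0:ℂ) r)ᶜ, ENNReal.ofReal (‖u‖ ^ t)
      ≤ ENNReal.ofReal (Real.pi * (t / (t + 2)) * r ^ (t + 2)) := by
  have ht0 : t < 0 := by linarith
  have ht0' : t ≠ 0 := ht0.ne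
  have ht2' : t + 2 < 0 := by linarith
  have hmeas : Measurable fun u : ℂ => ‖u‖ ^ t := by fun_prop
  rw [lintegral_eq_lintegral_meas_le _
    (ae_of_all _ fun u => Real.rpow_nonneg (norm_nonneg u) t) hmeas.aemeasurable]
  have hT : 0 < r ^ t := Real.rpow_pos_of_pos hr t
  have hq : -1 < t⁻¹ * 2 := by
    rw [inv_mul_eq_div, lt_div_iff_of_neg ht0]; linarith
  have h2 : ∀ s ∈ Ioi (r ^ t),
      (volume.restrict ((ball (0:ℂ) r)ᶜ)) {a : ℂ | s ≤ ‖a‖ ^ t} ≤ 0 := by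
    intro s hs
    rw [Measure.restrict_apply (kernel_meas_set t s)]
    have hempty : {a : ℂ | s ≤ ‖a‖ ^ t} ∩ (ball (0:ℂ) r)ᶜ = ∅ := by
      ext u
      simp only [mem_inter_iff, mem_setOf_eq, mem_compl_iff, mem_ball, dist_zero_right,
        not_lt, mem_empty_iff_false, iff_false, not_and]
      intro h1 h2
      have : ‖u‖ ^ t ≤ r ^ t := Real.rpow_le_rpow_of_nonpos hr h2 ht0.le
      have hs' : r ^ t < s := hs
      linarith
    rw [hempty]
    simp
  have h1 : (∫⁻ s in Ioc 0 (r ^ t), (volume.restrict ((ball (0:ℂ) r)ᶜ)) {a | s ≤ ‖a‖ ^ t})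
      ≤ ENNReal.ofReal (Real.pi * (t / (t + 2)) * r ^ (t + 2)) := by
    calc (∫⁻ s in Ioc 0 (r ^ t), (volume.restrict ((ball (0:ℂ) r)ᶜ)) {a | s ≤ ‖a‖ ^ t})
        ≤ ∫⁻ s in Ioc 0 (r ^ t), ENNReal.ofReal (Real.pi * s ^ (t⁻¹ * 2)) :=
          setLIntegral_mono' measurableSet_Ioc fun s hs =>
            kernel_meas_le t s ht0 hs.1 _
      _ = ENNReal.ofReal (∫ s in Ioc 0 (r ^ t), Real.pi * s ^ (t⁻¹ * 2)) := by
          rw [← ofReal_integral_eq_lintegral_ofReal]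
          · have hii : IntervalIntegrable (fun s : ℝ => s ^ (t⁻¹ * 2)) volume 0 (r ^ t) :=
              intervalIntegral.intervalIntegrable_rpow' hq
            exact ((intervalIntegrable_iff_integrableOn_Ioc_of_le hT.le).mp hii).const_mul _
          · filter_upwards [ae_restrict_mem measurableSet_Ioc] with s hs
            exact mul_nonneg Real.pi_nonneg (Real.rpow_nonneg hs.1.le _)
      _ ≤ ENNReal.ofReal (Real.pi * (t / (t + 2)) * r ^ (t + 2)) := by
          apply ENNReal.ofReal_le_ofReal
          have hs1 : t * (t⁻¹ * 2 + 1) = t + 2 := by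
            field_simp
            ring
          have hs2 : t⁻¹ * 2 + 1 = (t + 2) / t := by
            field_simp
            ring
          have hne : t⁻¹ * 2 + 1 ≠ 0 := ne_of_gt (by linarith)
          rw [integral_const_mul, ← intervalIntegral.integral_of_le hT.le,
            integral_rpow (Or.inl hq),
            Real.zero_rpow hne, sub_zero,
            ← Real.rpow_mul hr.le, hs1, hs2]
          apply le_of_eq
          rw [div_div_eq_mul_div]
          ring
  calc (∫⁻ s in Ioi 0, (volume.restrict ((ball (0:ℂ) r)ᶜ)) {a | s ≤ ‖a‖ ^ t})
      ≤ ∫⁻ s in Ioc 0 (r ^ t) ∪ Ioi (r ^ t),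
          (volume.restrict ((ball (0:ℂ) r)ᶜ)) {a | s ≤ ‖a‖ ^ t} := by
        apply lintegral_mono_set
        intro s hs
        rcases le_or_gt s (r ^ t) with h | h
        · exact Or.inl ⟨hs, h⟩
        · exact Or.inr h
    _ ≤ (∫⁻ s in Ioc 0 (r ^ t), (volume.restrict ((ball (0:ℂ) r)ᶜ)) {a | s ≤ ‖a‖ ^ t})
        + ∫⁻ s in Ioi (r ^ t), (volume.restrict ((ball (0:ℂ) r)ᶜ)) {a | s ≤ ‖a‖ ^ t} :=
        lintegral_union_le _ _ _
    _ ≤ ENNReal.ofReal (Real.pi * (t / (t + 2)) * r ^ (t + 2)) + 0 := by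
        apply add_le_add h1
        calc (∫⁻ s in Ioi (r ^ t), (volume.restrict ((ball (0:ℂ) r)ᶜ)) {a | s ≤ ‖a‖ ^ t})
            ≤ ∫⁻ _ in Ioi (r ^ t), (0:ℝ≥0∞) := setLIntegral_mono' measurableSet_Ioi h2
          _ = 0 := by simp
    _ = ENNReal.ofReal (Real.pi * (t / (t + 2)) * r ^ (t + 2)) := add_zero _

private lemma kernel_rpow_helper {x c : ℝ} (hx : 0 < x) (hc : 0 < c) {e1 e2 e3 : ℝ}
    (h : e1 + e2 = e3) : (c * x) ^ e1 * (c * x) ^ e2 = c ^ e3 * x ^ e3 := by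
  rw [← Real.rpow_add (mul_pos hc hx), h, Real.mul_rpow hc.le hx.le]

/-- Kernel estimate for the weighted Cauchy transform: for `0 < δ < 1` and `p > 2`,
`∫_{|u|<1} |u|^{-(2-δp/(p-1))} |z-u|^{-p/(p-1)} dA(u) ≤ c·|z|^{-(1-δ)p/(p-1)}`
for all `0 < |z| < 1`. -/
theorem kernel_estimate (p δ : ℝ) (hp : 2 < p) (hδ0 : 0 < δ) (hδ1 : δ < 1) :
    ∃ c : ℝ, 0 < c ∧ ∀ z : ℂ, 0 < ‖z‖ → ‖z‖ < 1 →
      (∫ u in ball (0 : ℂ) 1,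
          ‖u‖ ^ (δ * p / (p - 1) - 2) * ‖z - u‖ ^ (-(p / (p - 1))))
        ≤ c * ‖z‖ ^ (-((1 - δ) * p / (p - 1))) := by
  have hp1 : (0:ℝ) < p - 1 := by linarith
  set b : ℝ := p / (p - 1) with hbdef
  set a : ℝ := δ * p / (p - 1) with hadef
  have hb0 : 0 < b := div_pos (by linarith) hp1
  have hb2 : b < 2 := by rw [hbdef, div_lt_iff₀ hp1]; linarith
  have ha0 : 0 < a := div_pos (mul_pos hδ0 (by linarith)) hp1
  have hab : a < b := by
    rw [hadef, hbdef]
    exact (div_lt_div_iff_of_pos_right hp1).mpr (by nlinarith)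
  have ha2 : a < 2 := hab.trans hb2
  have hπ := Real.pi_nonneg
  set K1 : ℝ := (Real.pi + Real.pi * (b / (2 - b))) * (2:ℝ)⁻¹ ^ (a - b) with hK1def
  set K2 : ℝ := (Real.pi + Real.pi * ((2 - a) / a)) * (2:ℝ)⁻¹ ^ (-b) * (2:ℝ) ^ a with hK2def
  set K3 : ℝ := (2:ℝ)⁻¹ ^ (-b) * (Real.pi * ((a - b - 2) / (a - b)) * (2:ℝ) ^ (a - b))
    with hK3def
  have hK1 : 0 ≤ K1 := mul_nonneg (add_nonneg hπ (mul_nonneg hπ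
    (div_nonneg hb0.le (by linarith)))) (Real.rpow_nonneg (by norm_num) _)
  have hK2 : 0 ≤ K2 := mul_nonneg (mul_nonneg (add_nonneg hπ (mul_nonneg hπ
    (div_nonneg (by linarith) ha0.le))) (Real.rpow_nonneg (by norm_num) _))
    (Real.rpow_nonneg (by norm_num) _)
  have hK3 : 0 ≤ K3 := by
    have hd : 0 ≤ (a - b - 2) / (a - b) := by
      rw [div_nonneg_iff]
      right
      constructor <;> linarith
    exact mul_nonneg (Real.rpow_nonneg (by norm_num) _)
      (mul_nonneg (mul_nonneg hπ hd) (Real.rpow_nonneg (by norm_num) _))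
  refine ⟨K1 + K2 + K3 + 1, by linarith, fun z hz0 hz1 => ?_⟩
  have hR1 : (0:ℝ) < 2⁻¹ * ‖z‖ := by positivity
  have hR2 : (0:ℝ) < 2 * ‖z‖ := by positivity
  have hw : (0:ℝ) ≤ ‖z‖ ^ (a - b) := Real.rpow_nonneg (norm_nonneg z) _
  have hexp : -((1 - δ) * p / (p - 1)) = a - b := by
    rw [hadef, hbdef]
    field_simp
    ring
  rw [hexp]
  have hmeasf : AEStronglyMeasurable (fun u : ℂ => ‖u‖ ^ (a - 2) * ‖z - u‖ ^ (-b))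
      (volume.restrict (ball (0:ℂ) 1)) := by
    apply Measurable.aestronglyMeasurable
    fun_prop
  have hnnf : 0 ≤ᵐ[volume.restrict (ball (0:ℂ) 1)]
      fun u : ℂ => ‖u‖ ^ (a - 2) * ‖z - u‖ ^ (-b) :=
    ae_of_all _ fun u => mul_nonneg (Real.rpow_nonneg (norm_nonneg _) _)
      (Real.rpow_nonneg (norm_nonneg _) _)
  rw [integral_eq_lintegral_of_nonneg_ae hnnf hmeasf]
  apply ENNReal.toReal_le_of_le_ofReal (mul_nonneg (by linarith) hw)
  -- the three pieces
  have hpiece1 : (∫⁻ u in ball z (2⁻¹ * ‖z‖), ENNReal.ofReal (‖u‖ ^ (a - 2) * ‖z - u‖ ^ (-b)))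
      ≤ ENNReal.ofReal (K1 * ‖z‖ ^ (a - b)) := by
    have hcv : (∫⁻ u in ball z (2⁻¹ * ‖z‖), ENNReal.ofReal (‖z - u‖ ^ (-b)))
        = ∫⁻ v in ball (0:ℂ) (2⁻¹ * ‖z‖), ENNReal.ofReal (‖v‖ ^ (-b)) := by
      have emb : MeasurableEmbedding (fun u : ℂ => z - u) := by
        have : (fun u : ℂ => z - u) = fun u => z + (-u) := by funext u; ring
        rw [this]
        exact ((MeasurableEquiv.neg ℂ).trans (MeasurableEquiv.addLeft z)).measurableEmbedding
      have hpre : (fun u : ℂ => z - u) ⁻¹' (ball 0 (2⁻¹ * ‖z‖)) = ball z (2⁻¹ * ‖z‖) := by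
        ext u
        simp only [mem_preimage, mem_ball, dist_eq_norm, sub_zero]
        rw [norm_sub_rev]
      rw [← hpre]
      exact (Measure.measurePreserving_sub_left volume z).setLIntegral_comp_preimage_emb emb
        (fun v => ENNReal.ofReal (‖v‖ ^ (-b))) _
    calc (∫⁻ u in ball z (2⁻¹ * ‖z‖), ENNReal.ofReal (‖u‖ ^ (a - 2) * ‖z - u‖ ^ (-b)))
        ≤ ∫⁻ u in ball z (2⁻¹ * ‖z‖),
            ENNReal.ofReal ((2⁻¹ * ‖z‖) ^ (a - 2) * ‖z - u‖ ^ (-b)) := by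
          apply setLIntegral_mono' measurableSet_ball
          intro u hu
          apply ENNReal.ofReal_le_ofReal
          apply mul_le_mul_of_nonneg_right _ (Real.rpow_nonneg (norm_nonneg _) _)
          apply Real.rpow_le_rpow_of_nonpos hR1 _ (by linarith)
          have h1 : ‖z - u‖ < 2⁻¹ * ‖z‖ := by
            rw [mem_ball, dist_eq_norm] at hu
            rw [norm_sub_rev]
            exact hu
          have h2 : ‖z‖ - ‖u‖ ≤ ‖z - u‖ := norm_sub_norm_le z u
          linarith
      _ = ENNReal.ofReal ((2⁻¹ * ‖z‖) ^ (a - 2))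
          * ∫⁻ u in ball z (2⁻¹ * ‖z‖), ENNReal.ofReal (‖z - u‖ ^ (-b)) := by
          simp_rw [ENNReal.ofReal_mul (Real.rpow_nonneg hR1.le _)]
          exact lintegral_const_mul' _ _ ENNReal.ofReal_ne_top
      _ = ENNReal.ofReal ((2⁻¹ * ‖z‖) ^ (a - 2))
          * ∫⁻ v in ball (0:ℂ) (2⁻¹ * ‖z‖), ENNReal.ofReal (‖v‖ ^ (-b)) := by rw [hcv]
      _ ≤ ENNReal.ofReal ((2⁻¹ * ‖z‖) ^ (a - 2))
          * ENNReal.ofReal ((Real.pi + Real.pi * (-(-b) / (-b + 2)))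
              * (2⁻¹ * ‖z‖) ^ (-b + 2)) :=
          mul_le_mul_right (kernel_lint_ball (-b) _ (by linarith) (by linarith) hR1) _
      _ = ENNReal.ofReal (K1 * ‖z‖ ^ (a - b)) := by
          rw [← ENNReal.ofReal_mul (Real.rpow_nonneg hR1.le _)]
          congr 1
          have h := kernel_rpow_helper hz0 (by norm_num : (0:ℝ) < 2⁻¹)
            (show (a - 2) + (-b + 2) = a - b by ring)
          rw [hK1def]
          linear_combination (Real.pi + Real.pi * (-(-b) / (-b + 2))) * h
  have hpiece2 : (∫⁻ u in ball (0:ℂ) (2 * ‖z‖) \ ball z (2⁻¹ * ‖z‖),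
        ENNReal.ofReal (‖u‖ ^ (a - 2) * ‖z - u‖ ^ (-b)))
      ≤ ENNReal.ofReal (K2 * ‖z‖ ^ (a - b)) := by
    have Lb := kernel_lint_ball (a - 2) (2 * ‖z‖) (by linarith) (by linarith) hR2
    rw [show a - 2 + 2 = a by ring] at Lb
    calc (∫⁻ u in ball (0:ℂ) (2 * ‖z‖) \ ball z (2⁻¹ * ‖z‖),
          ENNReal.ofReal (‖u‖ ^ (a - 2) * ‖z - u‖ ^ (-b)))
        ≤ ∫⁻ u in ball (0:ℂ) (2 * ‖z‖) \ ball z (2⁻¹ * ‖z‖),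
            ENNReal.ofReal ((2⁻¹ * ‖z‖) ^ (-b) * ‖u‖ ^ (a - 2)) := by
          apply setLIntegral_mono' (measurableSet_ball.diff measurableSet_ball)
          intro u hu
          apply ENNReal.ofReal_le_ofReal
          have h1 : 2⁻¹ * ‖z‖ ≤ ‖z - u‖ := by
            have hu2 := hu.2
            simp only [mem_ball, dist_eq_norm, not_lt] at hu2
            rw [norm_sub_rev]
            exact hu2
          calc ‖u‖ ^ (a - 2) * ‖z - u‖ ^ (-b)
              ≤ ‖u‖ ^ (a - 2) * (2⁻¹ * ‖z‖) ^ (-b) :=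
                mul_le_mul_of_nonneg_left
                  (Real.rpow_le_rpow_of_nonpos hR1 h1 (by linarith))
                  (Real.rpow_nonneg (norm_nonneg _) _)
            _ = (2⁻¹ * ‖z‖) ^ (-b) * ‖u‖ ^ (a - 2) := mul_comm _ _
      _ = ENNReal.ofReal ((2⁻¹ * ‖z‖) ^ (-b))
          * ∫⁻ u in ball (0:ℂ) (2 * ‖z‖) \ ball z (2⁻¹ * ‖z‖),
              ENNReal.ofReal (‖u‖ ^ (a - 2)) := by
          simp_rw [ENNReal.ofReal_mul (Real.rpow_nonneg hR1.le _)]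
          exact lintegral_const_mul' _ _ ENNReal.ofReal_ne_top
      _ ≤ ENNReal.ofReal ((2⁻¹ * ‖z‖) ^ (-b))
          * ∫⁻ u in ball (0:ℂ) (2 * ‖z‖), ENNReal.ofReal (‖u‖ ^ (a - 2)) :=
          mul_le_mul_right (lintegral_mono_set diff_subset) _
      _ ≤ ENNReal.ofReal ((2⁻¹ * ‖z‖) ^ (-b))
          * ENNReal.ofReal ((Real.pi + Real.pi * (-(a - 2) / a)) * (2 * ‖z‖) ^ a) :=
          mul_le_mul_right Lb _
      _ = ENNReal.ofReal (K2 * ‖z‖ ^ (a - b)) := by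
          rw [← ENNReal.ofReal_mul (Real.rpow_nonneg hR1.le _)]
          congr 1
          have hm1 : ((2:ℝ)⁻¹ * ‖z‖) ^ (-b) = (2:ℝ)⁻¹ ^ (-b) * ‖z‖ ^ (-b) :=
            Real.mul_rpow (by norm_num) (norm_nonneg z)
          have hm2 : ((2:ℝ) * ‖z‖) ^ a = (2:ℝ) ^ a * ‖z‖ ^ a :=
            Real.mul_rpow (by norm_num) (norm_nonneg z)
          have hzz : ‖z‖ ^ (-b) * ‖z‖ ^ a = ‖z‖ ^ (a - b) := by
            rw [← Real.rpow_add hz0, show -b + a = a - b by ring]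
          rw [hm1, hm2, hK2def]
          linear_combination ((Real.pi + Real.pi * (-(a - 2) / a)) * (2:ℝ)⁻¹ ^ (-b)
            * (2:ℝ) ^ a) * hzz
  have hpiece3 : (∫⁻ u in ball (0:ℂ) 1 \ (ball z (2⁻¹ * ‖z‖) ∪ ball (0:ℂ) (2 * ‖z‖)),
        ENNReal.ofReal (‖u‖ ^ (a - 2) * ‖z - u‖ ^ (-b)))
      ≤ ENNReal.ofReal (K3 * ‖z‖ ^ (a - b)) := by
    have Lc := kernel_lint_compl (a - b - 2) (2 * ‖z‖) (by linarith) hR2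
    rw [show a - b - 2 + 2 = a - b by ring] at Lc
    calc (∫⁻ u in ball (0:ℂ) 1 \ (ball z (2⁻¹ * ‖z‖) ∪ ball (0:ℂ) (2 * ‖z‖)),
          ENNReal.ofReal (‖u‖ ^ (a - 2) * ‖z - u‖ ^ (-b)))
        ≤ ∫⁻ u in ball (0:ℂ) 1 \ (ball z (2⁻¹ * ‖z‖) ∪ ball (0:ℂ) (2 * ‖z‖)),
            ENNReal.ofReal ((2:ℝ)⁻¹ ^ (-b) * ‖u‖ ^ (a - b - 2)) := by
          apply setLIntegral_mono'
            (measurableSet_ball.diff (measurableSet_ball.union measurableSet_ball))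
          intro u hu
          apply ENNReal.ofReal_le_ofReal
          have hu2 : 2 * ‖z‖ ≤ ‖u‖ := by
            have h : u ∉ ball (0:ℂ) (2 * ‖z‖) := fun hm => hu.2 (Or.inr hm)
            simp only [mem_ball, dist_eq_norm, sub_zero, not_lt] at h
            exact h
          have hu0 : 0 < ‖u‖ := lt_of_lt_of_le hR2 hu2
          have hzu : 2⁻¹ * ‖u‖ ≤ ‖z - u‖ := by
            have h2 : ‖u‖ - ‖z‖ ≤ ‖u - z‖ := norm_sub_norm_le u z
            rw [norm_sub_rev]
            linarith
          calc ‖u‖ ^ (a - 2) * ‖z - u‖ ^ (-b)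
              ≤ ‖u‖ ^ (a - 2) * (2⁻¹ * ‖u‖) ^ (-b) :=
                mul_le_mul_of_nonneg_left
                  (Real.rpow_le_rpow_of_nonpos (by positivity) hzu (by linarith))
                  (Real.rpow_nonneg (norm_nonneg _) _)
            _ = (2:ℝ)⁻¹ ^ (-b) * ‖u‖ ^ (a - b - 2) := by
                rw [Real.mul_rpow (by norm_num : (0:ℝ) ≤ 2⁻¹) (norm_nonneg u),
                  show a - b - 2 = (a - 2) + -b by ring, Real.rpow_add hu0]
                ring
      _ = ENNReal.ofReal ((2:ℝ)⁻¹ ^ (-b))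
          * ∫⁻ u in ball (0:ℂ) 1 \ (ball z (2⁻¹ * ‖z‖) ∪ ball (0:ℂ) (2 * ‖z‖)),
              ENNReal.ofReal (‖u‖ ^ (a - b - 2)) := by
          simp_rw [ENNReal.ofReal_mul (Real.rpow_nonneg (by norm_num : (0:ℝ) ≤ 2⁻¹) _)]
          exact lintegral_const_mul' _ _ ENNReal.ofReal_ne_top
      _ ≤ ENNReal.ofReal ((2:ℝ)⁻¹ ^ (-b))
          * ∫⁻ u in (ball (0:ℂ) (2 * ‖z‖))ᶜ, ENNReal.ofReal (‖u‖ ^ (a - b - 2)) := by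
          apply mul_le_mul_right
          apply lintegral_mono_set
          intro u hu
          exact fun hm => hu.2 (Or.inr hm)
      _ ≤ ENNReal.ofReal ((2:ℝ)⁻¹ ^ (-b))
          * ENNReal.ofReal (Real.pi * ((a - b - 2) / (a - b)) * (2 * ‖z‖) ^ (a - b)) :=
          mul_le_mul_right Lc _
      _ = ENNReal.ofReal (K3 * ‖z‖ ^ (a - b)) := by
          rw [← ENNReal.ofReal_mul (Real.rpow_nonneg (by norm_num : (0:ℝ) ≤ 2⁻¹) _)]
          congr 1
          have hm3 : ((2:ℝ) * ‖z‖) ^ (a - b) = (2:ℝ) ^ (a - b) * ‖z‖ ^ (a - b) :=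
            Real.mul_rpow (by norm_num) (norm_nonneg z)
          rw [hm3, hK3def]
          ring
  have hcover : ball (0:ℂ) 1 ⊆ (ball z (2⁻¹ * ‖z‖) ∪ (ball (0:ℂ) (2 * ‖z‖) \ ball z (2⁻¹ * ‖z‖)))
      ∪ (ball (0:ℂ) 1 \ (ball z (2⁻¹ * ‖z‖) ∪ ball (0:ℂ) (2 * ‖z‖))) := by
    intro u hu
    by_cases h1 : u ∈ ball z (2⁻¹ * ‖z‖)
    · exact Or.inl (Or.inl h1)
    by_cases h2 : u ∈ ball (0:ℂ) (2 * ‖z‖)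
    · exact Or.inl (Or.inr ⟨h2, h1⟩)
    · exact Or.inr ⟨hu, fun h => h.elim h1 h2⟩
  calc (∫⁻ u in ball (0:ℂ) 1, ENNReal.ofReal (‖u‖ ^ (a - 2) * ‖z - u‖ ^ (-b)))
      ≤ ∫⁻ u in (ball z (2⁻¹ * ‖z‖) ∪ (ball (0:ℂ) (2 * ‖z‖) \ ball z (2⁻¹ * ‖z‖)))
          ∪ (ball (0:ℂ) 1 \ (ball z (2⁻¹ * ‖z‖) ∪ ball (0:ℂ) (2 * ‖z‖))),
          ENNReal.ofReal (‖u‖ ^ (a - 2) * ‖z - u‖ ^ (-b)) := lintegral_mono_set hcover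
    _ ≤ (∫⁻ u in ball z (2⁻¹ * ‖z‖) ∪ (ball (0:ℂ) (2 * ‖z‖) \ ball z (2⁻¹ * ‖z‖)),
          ENNReal.ofReal (‖u‖ ^ (a - 2) * ‖z - u‖ ^ (-b)))
        + ∫⁻ u in ball (0:ℂ) 1 \ (ball z (2⁻¹ * ‖z‖) ∪ ball (0:ℂ) (2 * ‖z‖)),
          ENNReal.ofReal (‖u‖ ^ (a - 2) * ‖z - u‖ ^ (-b)) := lintegral_union_le _ _ _
    _ ≤ ((∫⁻ u in ball z (2⁻¹ * ‖z‖), ENNReal.ofReal (‖u‖ ^ (a - 2) * ‖z - u‖ ^ (-b)))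
        + ∫⁻ u in ball (0:ℂ) (2 * ‖z‖) \ ball z (2⁻¹ * ‖z‖),
          ENNReal.ofReal (‖u‖ ^ (a - 2) * ‖z - u‖ ^ (-b)))
        + ∫⁻ u in ball (0:ℂ) 1 \ (ball z (2⁻¹ * ‖z‖) ∪ ball (0:ℂ) (2 * ‖z‖)),
          ENNReal.ofReal (‖u‖ ^ (a - 2) * ‖z - u‖ ^ (-b)) :=
        add_le_add_left (lintegral_union_le _ _ _) _
    _ ≤ (ENNReal.ofReal (K1 * ‖z‖ ^ (a - b)) + ENNReal.ofReal (K2 * ‖z‖ ^ (a - b)))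
        + ENNReal.ofReal (K3 * ‖z‖ ^ (a - b)) :=
        add_le_add (add_le_add hpiece1 hpiece2) hpiece3
    _ ≤ ENNReal.ofReal ((K1 + K2 + K3 + 1) * ‖z‖ ^ (a - b)) := by
        rw [← ENNReal.ofReal_add (mul_nonneg hK1 hw) (mul_nonneg hK2 hw),
          ← ENNReal.ofReal_add (add_nonneg (mul_nonneg hK1 hw) (mul_nonneg hK2 hw))
            (mul_nonneg hK3 hw)]
        apply ENNReal.ofReal_le_ofReal
        nlinarith [hw, hK1, hK2, hK3]
end

section
/- For any ε > 0 there is a constant c such that for every smooth function f on the closed unit disk, ∫_{|z|<1} |z|^{-2+2ε} |f(z)|² dA ≤ c ( ∫_{|z|<1} |df|² dA + ∫_{1/2<|z|<1} |f|² dA ). (Weighted Hardy-type inequality on the disk with boundary term.) -/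
open MeasureTheory Metric Set intervalIntegral Real

noncomputable section AuxHardy

namespace AuxHardy

variable (f : ℂ → ℝ)

def sym (r θ : ℝ) : ℂ := ↑r * (↑(Real.cos θ) + ↑(Real.sin θ) * Complex.I)

lemma sym_eq (r θ : ℝ) : Complex.polarCoord.symm (r, θ) = sym r θ :=
  Complex.polarCoord_symm_apply _

def F (r θ : ℝ) : ℝ := f (sym r θ)

def G (r θ : ℝ) : ℝ := ‖fderiv ℝ f (sym r θ)‖

def Hh (θ : ℝ) : ℝ := ∫ t in (0:ℝ)..1, t * (G f t θ)^2

def Aa (θ : ℝ) : ℝ := ∫ s in (1/2:ℝ)..(3/4), 2*(s * (F f s θ)^2)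

def In (θ : ℝ) : ℝ := ∫ r in (1/2:ℝ)..1, r * (F f r θ)^2

lemma sym_cont : Continuous (fun p : ℝ × ℝ => sym p.1 p.2) := by
  unfold sym
  fun_prop

lemma sym_cont' (θ : ℝ) : Continuous (fun r : ℝ => sym r θ) :=
  sym_cont.comp (continuous_id.prodMk continuous_const)

lemma norm_sym {r : ℝ} (θ : ℝ) (hr : 0 ≤ r) : ‖sym r θ‖ = r := by
  rw [← sym_eq, Complex.norm_polarCoord_symm, abs_of_nonneg hr]

lemma sym_smul (t θ : ℝ) : sym t θ = t • sym 1 θ := by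
  unfold sym
  rw [Complex.real_smul, Complex.ofReal_one, one_mul]

/-- polar coordinates computation for annuli -/
lemma polar_annulus (ψ : ℂ → ℝ) (hψ : Continuous ψ) {a b : ℝ} (h0 : 0 ≤ a) (hab : a ≤ b)
    (hb1 : b ≤ 1) :
    ∫ z in {z : ℂ | a < ‖z‖ ∧ ‖z‖ < b}, ψ z
      = ∫ θ in Ioo (-π) π, ∫ r in a..b, r * ψ (sym r θ) := by
  set S := {z : ℂ | a < ‖z‖ ∧ ‖z‖ < b} with hS
  have hSm : MeasurableSet S :=
    ((isOpen_lt continuous_const continuous_norm).inter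
      (isOpen_lt continuous_norm continuous_const)).measurableSet
  set g : ℂ → ℝ := Set.indicator S ψ with hg
  have hgm : Measurable g := hψ.measurable.indicator hSm
  have h1 : ∫ z in S, ψ z = ∫ z, g z := (MeasureTheory.integral_indicator hSm).symm
  rw [h1, ← Complex.integral_comp_polarCoord_symm]
  have hsymmp : ∀ p : ℝ × ℝ, Complex.polarCoord.symm p = sym p.1 p.2 := fun p => sym_eq p.1 p.2
  simp only [hsymmp, smul_eq_mul]
  set Φ : ℝ × ℝ → ℝ := fun p => p.1 * g (sym p.1 p.2) with hΦ
  have hΦm : Measurable Φ := measurable_fst.mul (hgm.comp sym_cont.measurable)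
  obtain ⟨M, hM⟩ : ∃ M, ∀ z ∈ closedBall (0:ℂ) 1, ‖ψ z‖ ≤ M :=
    (isCompact_closedBall (0:ℂ) 1).exists_bound_of_continuousOn hψ.continuousOn
  have hGb : ∀ z : ℂ, ‖g z‖ ≤ max M 0 := by
    intro z
    by_cases hz : z ∈ S
    · rw [hg, Set.indicator_of_mem hz]
      exact le_max_of_le_left (hM z (mem_closedBall_zero_iff.mpr (le_trans (le_of_lt hz.2) hb1)))
    · rw [hg, Set.indicator_of_notMem hz]
      simp
  set B : Set (ℝ × ℝ) := Set.Ioo (0:ℝ) 1 ×ˢ Set.Ioo (-π) π with hBdef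
  have hBm : MeasurableSet B := measurableSet_Ioo.prod measurableSet_Ioo
  have hBvol : volume B ≠ ⊤ := by
    rw [hBdef, Measure.volume_eq_prod, Measure.prod_prod, Real.volume_Ioo, Real.volume_Ioo]
    exact ENNReal.mul_ne_top ENNReal.ofReal_ne_top ENNReal.ofReal_ne_top
  have hIntB : IntegrableOn Φ B := by
    apply Measure.integrableOn_of_bounded hBvol hΦm.aestronglyMeasurable
    filter_upwards [ae_restrict_mem hBm] with p hp
    calc ‖Φ p‖ = |p.1| * ‖g (sym p.1 p.2)‖ := by rw [hΦ]; simp [abs_mul]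
      _ ≤ 1 * max M 0 := by
          apply mul_le_mul _ (hGb _) (norm_nonneg _) zero_le_one
          rw [abs_of_nonneg hp.1.1.le]
          exact hp.1.2.le
      _ = max M 0 := one_mul _
  have hzero : ∀ p ∈ polarCoord.target \ B, Φ p = 0 := by
    intro p hp
    have hp1 : (0:ℝ) < p.1 := hp.1.1
    have hp2 : p.2 ∈ Set.Ioo (-π) π := hp.1.2
    have h1 : ¬ (p.1 < 1) := fun hlt => hp.2 ⟨⟨hp1, hlt⟩, hp2⟩
    have hg0 : g (sym p.1 p.2) = 0 := by
      apply Set.indicator_of_notMem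
      rw [hS]
      simp only [Set.mem_setOf_eq, norm_sym p.2 hp1.le]
      rintro ⟨h2, h3⟩
      exact h1 (lt_of_lt_of_le h3 hb1)
    rw [hΦ]
    simp only [hg0, mul_zero]
  have hIntT : IntegrableOn Φ polarCoord.target := by
    have hz : IntegrableOn Φ (polarCoord.target \ B) := by
      apply (integrableOn_zero (ε' := ℝ)).congr_fun _
        ((polarCoord.open_target.measurableSet).diff hBm)
      intro p hp
      exact (hzero p hp).symm
    apply (hIntB.union hz).mono_set
    intro p hp
    by_cases h : p ∈ B
    · exact Set.mem_union_left _ h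
    · exact Set.mem_union_right _ ⟨hp, h⟩
  have htgt : polarCoord.target = Set.Ioi (0:ℝ) ×ˢ Set.Ioo (-π) π := rfl
  have hIntT' : Integrable Φ
      ((volume.restrict (Set.Ioi (0:ℝ))).prod (volume.restrict (Set.Ioo (-π) π))) := by
    rw [Measure.prod_restrict, ← Measure.volume_eq_prod]
    rw [htgt] at hIntT
    exact hIntT
  have hfub : ∫ p in polarCoord.target, Φ p
      = ∫ θ in Set.Ioo (-π) π, ∫ r in Set.Ioi (0:ℝ), Φ (r, θ) := by
    rw [htgt, Measure.volume_eq_prod, ← Measure.prod_restrict]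
    exact integral_prod_symm Φ hIntT'
  rw [hfub]
  apply setIntegral_congr_fun measurableSet_Ioo
  intro θ _
  dsimp only
  have h1 : ∀ r ∈ Set.Ioi (0:ℝ), Φ (r, θ)
      = Set.indicator (Set.Ioo a b) (fun r => r * ψ (sym r θ)) r := by
    intro r hr
    have hr0 : (0:ℝ) < r := hr
    by_cases hmem : sym r θ ∈ S
    · have hrab : r ∈ Set.Ioo a b := by
        have h2 := hmem
        rw [hS, Set.mem_setOf_eq, norm_sym θ hr0.le] at h2
        exact ⟨h2.1, h2.2⟩
      simp only [hΦ]
      rw [hg, Set.indicator_of_mem hmem, Set.indicator_of_mem hrab]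
    · have hrab : r ∉ Set.Ioo a b := by
        intro hr2
        apply hmem
        rw [hS, Set.mem_setOf_eq, norm_sym θ hr0.le]
        exact ⟨hr2.1, hr2.2⟩
      simp only [hΦ]
      rw [hg, Set.indicator_of_notMem hmem, Set.indicator_of_notMem hrab, mul_zero]
  have hsub : Set.Ioi (0:ℝ) ∩ Set.Ioo a b = Set.Ioo a b :=
    Set.inter_eq_self_of_subset_right (fun x hx => lt_of_le_of_lt h0 hx.1)
  rw [setIntegral_congr_fun measurableSet_Ioi h1, setIntegral_indicator measurableSet_Ioo,
    hsub, ← MeasureTheory.integral_Ioc_eq_integral_Ioo, ← intervalIntegral.integral_of_le hab]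

variable {f}

lemma cswap {α : Type*} [TopologicalSpace α] {g : ℝ → ℝ → α}
    (h : Continuous fun p : ℝ × ℝ => g p.1 p.2) : Continuous fun p : ℝ × ℝ => g p.2 p.1 :=
  Continuous.comp (g := fun p : ℝ × ℝ => g p.1 p.2) (f := fun p : ℝ × ℝ => (p.2, p.1)) h
    (continuous_snd.prodMk continuous_fst)

lemma cont_F (hf : ContDiff ℝ (⊤ : ℕ∞) f) : Continuous (fun p : ℝ × ℝ => F f p.1 p.2) :=
  (hf.continuous).comp (sym_cont)

lemma cont_G (hf : ContDiff ℝ (⊤ : ℕ∞) f) : Continuous (fun p : ℝ × ℝ => G f p.1 p.2) :=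
  (continuous_norm.comp ((hf.continuous_fderiv (by simp)).comp (sym_cont)))

lemma cont_Hh (hf : ContDiff ℝ (⊤ : ℕ∞) f) : Continuous (Hh f) := by
  unfold Hh
  have : Continuous (fun p : ℝ × ℝ => G f p.2 p.1) := cswap (cont_G hf)
  exact intervalIntegral.continuous_parametric_intervalIntegral_of_continuous'
    (f := fun θ t => t * (G f t θ)^2) (by exact continuous_snd.mul (this.pow 2)) 0 1

lemma cont_Aa (hf : ContDiff ℝ (⊤ : ℕ∞) f) : Continuous (Aa f) := by
  unfold Aa
  have : Continuous (fun p : ℝ × ℝ => F f p.2 p.1) := cswap (cont_F hf)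
  exact intervalIntegral.continuous_parametric_intervalIntegral_of_continuous'
    (f := fun θ s => 2*(s * (F f s θ)^2))
    (by exact continuous_const.mul (continuous_snd.mul (this.pow 2))) (1/2) (3/4)

lemma cont_In (hf : ContDiff ℝ (⊤ : ℕ∞) f) : Continuous (In f) := by
  unfold In
  have : Continuous (fun p : ℝ × ℝ => F f p.2 p.1) := cswap (cont_F hf)
  exact intervalIntegral.continuous_parametric_intervalIntegral_of_continuous'
    (f := fun θ r => r * (F f r θ)^2) (by exact continuous_snd.mul (this.pow 2)) (1/2) 1

lemma Hh_nonneg (θ : ℝ) : 0 ≤ Hh f θ := by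
  apply intervalIntegral.integral_nonneg (by norm_num)
  intro t ht
  exact mul_nonneg ht.1 (sq_nonneg _)

lemma Aa_nonneg (θ : ℝ) : 0 ≤ Aa f θ := by
  apply intervalIntegral.integral_nonneg (by norm_num)
  intro t ht
  have : (0:ℝ) ≤ t := le_trans (by norm_num) ht.1
  positivity

lemma cont_F1 (hf : ContDiff ℝ (⊤ : ℕ∞) f) (θ : ℝ) : Continuous fun r : ℝ => F f r θ :=
  Continuous.comp (g := fun p : ℝ × ℝ => F f p.1 p.2) (f := fun r : ℝ => (r, θ)) (cont_F hf)
    (continuous_id.prodMk continuous_const)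

lemma cont_G1 (hf : ContDiff ℝ (⊤ : ℕ∞) f) (θ : ℝ) : Continuous fun r : ℝ => G f r θ :=
  Continuous.comp (g := fun p : ℝ × ℝ => G f p.1 p.2) (f := fun r : ℝ => (r, θ)) (cont_G hf)
    (continuous_id.prodMk continuous_const)

/-- Cauchy–Schwarz / fundamental theorem of calculus estimate along rays. -/
lemma cs (hf : ContDiff ℝ (⊤ : ℕ∞) f) {a b : ℝ} (θ : ℝ) (ha : 0 < a) (hab : a ≤ b) (hb : b ≤ 1) :
    (F f b θ - F f a θ)^2 ≤ (Real.log b - Real.log a) * Hh f θ := by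
  have hb0 : 0 < b := lt_of_lt_of_le ha hab
  have hGc : Continuous (fun t : ℝ => G f t θ) := cont_G1 hf θ
  have hd : Continuous (fun t : ℝ => (fderiv ℝ f (sym t θ)) (sym 1 θ)) := by
    have h1 : Continuous (fun t : ℝ => fderiv ℝ f (sym t θ)) :=
      (hf.continuous_fderiv (by simp)).comp (sym_cont' θ)
    exact h1.clm_apply continuous_const
  have hderiv : ∀ t : ℝ, HasDerivAt (fun u => F f u θ) ((fderiv ℝ f (sym t θ)) (sym 1 θ)) t := by
    intro t
    have h1 : HasDerivAt (fun u : ℝ => u • sym 1 θ) (sym 1 θ) t := by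
      simpa using (hasDerivAt_id t).smul_const (sym 1 θ)
    have h2 : HasFDerivAt f (fderiv ℝ f (t • sym 1 θ)) (t • sym 1 θ) :=
      (hf.differentiable (by simp) (t • sym 1 θ)).hasFDerivAt
    have h3 := h2.comp_hasDerivAt t h1
    have hFeq : (fun u : ℝ => F f u θ) = fun u : ℝ => f (u • sym 1 θ) := by
      funext u; rw [F, sym_smul u θ]
    rw [hFeq, sym_smul t θ]
    exact h3
  have hftc : ∫ t in a..b, (fderiv ℝ f (sym t θ)) (sym 1 θ) = F f b θ - F f a θ :=
    intervalIntegral.integral_eq_sub_of_hasDerivAt (fun t _ => hderiv t)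
      (hd.intervalIntegrable a b)
  set e := ∫ t in a..b, G f t θ with he
  have he_nn : 0 ≤ e :=
    intervalIntegral.integral_nonneg hab (fun t _ => norm_nonneg _)
  have habs : |F f b θ - F f a θ| ≤ e := by
    rw [← hftc]
    refine le_trans (intervalIntegral.abs_integral_le_integral_abs hab) ?_
    apply intervalIntegral.integral_mono_on hab (hd.abs.intervalIntegrable a b)
      (hGc.intervalIntegrable a b)
    intro t ht
    calc |(fderiv ℝ f (sym t θ)) (sym 1 θ)| = ‖(fderiv ℝ f (sym t θ)) (sym 1 θ)‖ := rfl
      _ ≤ ‖fderiv ℝ f (sym t θ)‖ * ‖sym 1 θ‖ := ContinuousLinearMap.le_opNorm _ _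
      _ = G f t θ := by rw [norm_sym θ zero_le_one, mul_one]; rfl
  set X := Real.log b - Real.log a with hXdef
  set Y := ∫ t in a..b, t * (G f t θ)^2 with hYdef
  have hXnn : 0 ≤ X := sub_nonneg.mpr (Real.log_le_log ha hab)
  have hYnn : 0 ≤ Y :=
    intervalIntegral.integral_nonneg hab
      (fun t ht => mul_nonneg (ha.le.trans ht.1) (sq_nonneg _))
  have h0uIcc : ∀ t ∈ Set.uIcc a b, t ≠ 0 := by
    intro t ht
    rw [Set.uIcc_of_le hab] at ht
    exact ne_of_gt (lt_of_lt_of_le ha ht.1)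
  have hX : ∫ t in a..b, 1/t = X := by
    rw [integral_one_div (fun h => (h0uIcc 0 h) rfl), Real.log_div hb0.ne' ha.ne']
  have hAM : ∀ l : ℝ, 0 < l → e ≤ X/(2*l) + l*Y/2 := by
    intro l hl
    have int1 : IntervalIntegrable (fun t : ℝ => (1/t)/(2*l)) volume a b := by
      apply ContinuousOn.intervalIntegrable
      exact ((continuousOn_const.div continuousOn_id h0uIcc).div_const _)
    have int2 : IntervalIntegrable (fun t : ℝ => l*(t*(G f t θ)^2)/2) volume a b :=
      ((continuous_const.mul (continuous_id.mul (hGc.pow 2))).div_const 2).intervalIntegrable a b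
    have hmono : e ≤ ∫ t in a..b, ((1/t)/(2*l) + l*(t*(G f t θ)^2)/2) := by
      apply intervalIntegral.integral_mono_on hab (hGc.intervalIntegrable a b) (int1.add int2)
      intro t ht
      have ht0 : 0 < t := lt_of_lt_of_le ha ht.1
      have h2 : 2*(l*t)*(G f t θ) ≤ 1 + (l*t*(G f t θ))^2 := by
        nlinarith [sq_nonneg (1 - l*t*(G f t θ))]
      have hlt : 0 < l*t := mul_pos hl ht0
      calc G f t θ = (2*(l*t)*(G f t θ))/(2*(l*t)) := by field_simp
        _ ≤ (1 + (l*t*(G f t θ))^2)/(2*(l*t)) := by gcongr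
        _ = (1/t)/(2*l) + l*(t*(G f t θ)^2)/2 := by field_simp
    rw [intervalIntegral.integral_add int1 int2] at hmono
    have e1 : ∫ t in a..b, (1/t)/(2*l) = X/(2*l) := by
      rw [intervalIntegral.integral_div, hX]
    have e2 : ∫ t in a..b, l*(t*(G f t θ)^2)/2 = l*Y/2 := by
      rw [intervalIntegral.integral_div, intervalIntegral.integral_const_mul, hYdef]
    rw [e1, e2] at hmono
    exact hmono
  have hesq : e^2 ≤ X*Y := by
    rcases eq_or_lt_of_le he_nn with h|h
    · rw [← h]; simpa using mul_nonneg hXnn hYnn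
    · rcases eq_or_lt_of_le hYnn with hY0|hY0
      · exfalso
        have hl : 0 < (X+1)/(2*e) := by positivity
        have hle := hAM _ hl
        rw [← hY0, mul_zero, zero_div, add_zero] at hle
        have h2 : X / (2 * ((X + 1) / (2 * e))) = X * e / (X+1) := by
          rw [div_eq_div_iff (by positivity) (by positivity)]
          field_simp
        rw [h2, div_eq_mul_inv] at hle
        have h5 := mul_le_mul_of_nonneg_right hle (show (0:ℝ) ≤ X+1 by linarith)
        have h6 : X * e * (X+1)⁻¹ * (X+1) = X * e := by field_simp
        rw [h6] at h5
        nlinarith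
      · have hle := hAM (e/Y) (div_pos h hY0)
        have h1 : X/(2*(e/Y)) = X*Y/(2*e) := by
          rw [div_eq_div_iff (by positivity) (by positivity)]
          field_simp
        have h2 : e/Y*Y/2 = e/2 := by field_simp
        rw [h1, h2] at hle
        have h3 : e/2 ≤ X*Y/(2*e) := by linarith
        rw [div_le_div_iff₀ (by norm_num) (by positivity)] at h3
        nlinarith
  calc (F f b θ - F f a θ)^2 = |F f b θ - F f a θ|^2 := (sq_abs _).symm
    _ ≤ e^2 := by nlinarith [abs_nonneg (F f b θ - F f a θ)]
    _ ≤ X*Y := hesq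
    _ ≤ X * Hh f θ := by
      apply mul_le_mul_of_nonneg_left _ hXnn
      apply intervalIntegral.integral_mono_interval ha.le hab hb
      · filter_upwards [ae_restrict_mem measurableSet_Ioc] with t ht
        exact mul_nonneg ht.1.le (sq_nonneg _)
      · exact (continuous_id.mul (hGc.pow 2)).intervalIntegrable 0 1

/-- main pointwise radial estimate -/
lemma key (hf : ContDiff ℝ (⊤ : ℕ∞) f) {r : ℝ} (θ : ℝ) (hr0 : 0 < r) (hr1 : r < 1) :
    (F f r θ)^2 ≤ 8 * Aa f θ + (2 * (1 - Real.log r)) * Hh f θ := by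
  have hlogr : Real.log r < 0 := Real.log_neg hr0 hr1
  set C := (2 * (1 - Real.log r)) * Hh f θ with hC
  have hstep : ∀ s ∈ Set.Icc (1/2:ℝ) (3/4), (F f r θ)^2 ≤ 4*(s*(F f s θ)^2) + C := by
    intro s hs
    have hdiffsq : (F f r θ - F f s θ)^2 ≤ (1 - Real.log r) * Hh f θ := by
      rcases le_total r s with h|h
      · have hcs := cs hf θ hr0 h (by linarith [hs.2])
        calc (F f r θ - F f s θ)^2 = (F f s θ - F f r θ)^2 := by ring
          _ ≤ (Real.log s - Real.log r) * Hh f θ := hcs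
          _ ≤ (1 - Real.log r) * Hh f θ := by
              apply mul_le_mul_of_nonneg_right _ (Hh_nonneg θ)
              have : Real.log s ≤ 0 := Real.log_nonpos (by linarith [hs.1]) (by linarith [hs.2])
              linarith
      · have hcs := cs hf θ (by linarith [hs.1] : (0:ℝ) < s) h hr1.le
        refine le_trans hcs ?_
        apply mul_le_mul_of_nonneg_right _ (Hh_nonneg θ)
        have h1 : Real.log (1/2) ≤ Real.log s := Real.log_le_log (by norm_num) hs.1
        have h2 : Real.log (1/2) = -Real.log 2 := by rw [one_div, Real.log_inv]
        have h3 : Real.log 2 ≤ 1 := by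
          have := Real.log_le_sub_one_of_pos (by norm_num : (0:ℝ) < 2)
          linarith
        linarith
    rw [hC]
    nlinarith [sq_nonneg (F f r θ - 2*F f s θ), sq_nonneg (F f s θ), hs.1, Hh_nonneg (f := f) θ]
  have hFc : Continuous fun s : ℝ => F f s θ := cont_F1 hf θ
  have int1 : IntervalIntegrable (fun s : ℝ => 4*(s*(F f s θ)^2)) volume (1/2) (3/4) :=
    (continuous_const.mul (continuous_id.mul (hFc.pow 2))).intervalIntegrable _ _
  have hmono := intervalIntegral.integral_mono_on (by norm_num : (1/2:ℝ) ≤ 3/4)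
    (_root_.intervalIntegrable_const (c := (F f r θ)^2))
    (int1.add (_root_.intervalIntegrable_const (c := C))) hstep
  rw [intervalIntegral.integral_const, intervalIntegral.integral_add int1
    (_root_.intervalIntegrable_const (c := C)), intervalIntegral.integral_const] at hmono
  have hins : ∫ s in (1/2:ℝ)..(3/4), 4*(s*(F f s θ)^2) = 2 * Aa f θ := by
    rw [Aa, ← intervalIntegral.integral_const_mul]
    apply intervalIntegral.integral_congr
    intro s _
    ring
  rw [hins] at hmono
  simp only [smul_eq_mul] at hmono
  norm_num at hmono
  linarith

end AuxHardy

end AuxHardy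

open AuxHardy

/-- Weighted Hardy-type inequality on the disk with boundary term: for any `ε > 0`
there is `c` such that for every smooth `f` on the closed unit disk,
`∫_{|z|<1} |z|^{-2+2ε} |f|² ≤ c (∫_{|z|<1} |df|² + ∫_{1/2<|z|<1} |f|²)`. -/
theorem weighted_hardy_disk (ε : ℝ) (hε : 0 < ε) :
    ∃ c : ℝ, 0 < c ∧ ∀ f : ℂ → ℝ, ContDiff ℝ (⊤ : ℕ∞) f →
      (∫ z in ball (0 : ℂ) 1, ‖z‖ ^ (-2 + 2 * ε) * (f z) ^ 2)
        ≤ c * ((∫ z in ball (0 : ℂ) 1, ‖fderiv ℝ f z‖ ^ 2)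
              + ∫ z in {z : ℂ | 1 / 2 < ‖z‖ ∧ ‖z‖ < 1}, (f z) ^ 2) := by
  classical
  set uA : ℝ → ℝ := Set.indicator (Set.Ioo 0 1) (fun r => 8 * r ^ (2*ε-1)) with huA
  set uH : ℝ → ℝ :=
    Set.indicator (Set.Ioo 0 1) (fun r => 2/ε * r ^ (ε-1) + 2 * r ^ (2*ε-1)) with huH
  set k1 : ℝ := ∫ r in Set.Ioi (0:ℝ), uA r with hk1def
  set k2 : ℝ := ∫ r in Set.Ioi (0:ℝ), uH r with hk2def
  have hk1 : 0 ≤ k1 := by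
    apply setIntegral_nonneg measurableSet_Ioi
    intro r _
    apply Set.indicator_nonneg
    intro x hx
    have := Real.rpow_nonneg hx.1.le (2*ε-1)
    linarith
  have hk2 : 0 ≤ k2 := by
    apply setIntegral_nonneg measurableSet_Ioi
    intro r _
    apply Set.indicator_nonneg
    intro x hx
    have h1 := Real.rpow_nonneg hx.1.le (2*ε-1)
    have h2 := Real.rpow_nonneg hx.1.le (ε-1)
    have h3 : 0 ≤ 2/ε := by positivity
    nlinarith
  refine ⟨2*k1 + k2 + 1, by linarith, ?_⟩
  intro f hf
  set c : ℝ := 2*k1 + k2 + 1 with hcdef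
  -- integrability of the two weight profiles
  have hioo : Set.Ioo (0:ℝ) 1 ∩ Set.Ioi 0 = Set.Ioo 0 1 :=
    Set.inter_eq_self_of_subset_left (fun x hx => hx.1)
  have hrpow_int : ∀ q : ℝ, -1 < q →
      IntegrableOn (fun r : ℝ => r ^ q) (Set.Ioo (0:ℝ) 1) volume := by
    intro q hq
    exact (intervalIntegral.intervalIntegrable_rpow' hq).1.mono_set Set.Ioo_subset_Ioc_self
  have intA : Integrable uA (volume.restrict (Set.Ioi (0:ℝ))) := by
    rw [huA, integrable_indicator_iff measurableSet_Ioo, IntegrableOn,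
      Measure.restrict_restrict measurableSet_Ioo, hioo]
    exact (hrpow_int _ (by linarith)).const_mul 8
  have intH : Integrable uH (volume.restrict (Set.Ioi (0:ℝ))) := by
    rw [huH, integrable_indicator_iff measurableSet_Ioo, IntegrableOn,
      Measure.restrict_restrict measurableSet_Ioo, hioo]
    exact ((hrpow_int _ (by linarith)).const_mul (2/ε)).add
      ((hrpow_int _ (by linarith)).const_mul 2)
  have intAa : Integrable (Aa f) (volume.restrict (Set.Ioo (-π) π)) :=
    (cont_Aa hf).integrableOn_Icc.mono_set Set.Ioo_subset_Icc_self
  have intHh : Integrable (Hh f) (volume.restrict (Set.Ioo (-π) π)) :=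
    (cont_Hh hf).integrableOn_Icc.mono_set Set.Ioo_subset_Icc_self
  have intIn : Integrable (In f) (volume.restrict (Set.Ioo (-π) π)) :=
    (cont_In hf).integrableOn_Icc.mono_set Set.Ioo_subset_Icc_self
  have htgt : polarCoord.target = Set.Ioi (0:ℝ) ×ˢ Set.Ioo (-π) π := rfl
  have hmeq : (volume : Measure (ℝ × ℝ)).restrict polarCoord.target
      = (volume.restrict (Set.Ioi (0:ℝ))).prod (volume.restrict (Set.Ioo (-π) π)) := by
    rw [htgt, Measure.volume_eq_prod, Measure.prod_restrict]
  have prod1 : Integrable (fun p : ℝ × ℝ => uA p.1 * Aa f p.2)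
      (volume.restrict polarCoord.target) := by
    rw [hmeq]; exact intA.mul_prod intAa
  have prod2 : Integrable (fun p : ℝ × ℝ => uH p.1 * Hh f p.2)
      (volume.restrict polarCoord.target) := by
    rw [hmeq]; exact intH.mul_prod intHh
  set φ : ℂ → ℝ := fun z => ‖z‖ ^ (-2 + 2*ε) * (f z)^2 with hφ
  have hsymmp : ∀ p : ℝ × ℝ, Complex.polarCoord.symm p = sym p.1 p.2 := fun p => sym_eq p.1 p.2
  -- left-hand side in polar coordinates
  have hLpolar : ∫ z in ball (0:ℂ) 1, φ z
      = ∫ p in polarCoord.target, p.1 • (Set.indicator (ball (0:ℂ) 1) φ)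
          (Complex.polarCoord.symm p) := by
    rw [← MeasureTheory.integral_indicator measurableSet_ball,
      ← Complex.integral_comp_polarCoord_symm]
  -- pointwise comparison on the target
  have hle : ∀ p ∈ polarCoord.target,
      p.1 • (Set.indicator (ball (0:ℂ) 1) φ) (Complex.polarCoord.symm p)
        ≤ uA p.1 * Aa f p.2 + uH p.1 * Hh f p.2 := by
    rintro ⟨r, θ⟩ hp
    rw [htgt] at hp
    have hr0 : (0:ℝ) < r := hp.1
    have hnorm : ‖Complex.polarCoord.symm (r, θ)‖ = r := by
      rw [hsymmp]; exact norm_sym θ hr0.le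
    by_cases hr1 : r < 1
    · have hmem : Complex.polarCoord.symm (r, θ) ∈ ball (0:ℂ) 1 := by
        rw [mem_ball_zero_iff, hnorm]; exact hr1
      rw [Set.indicator_of_mem hmem, hφ]
      have hrIoo : r ∈ Set.Ioo (0:ℝ) 1 := ⟨hr0, hr1⟩
      have huAr : uA r = 8 * r ^ (2*ε-1) := by rw [huA, Set.indicator_of_mem hrIoo]
      have huHr : uH r = 2/ε * r ^ (ε-1) + 2 * r ^ (2*ε-1) := by
        rw [huH, Set.indicator_of_mem hrIoo]
      have hFval : f (Complex.polarCoord.symm (r, θ)) = F f r θ := by rw [hsymmp]; rfl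
      have hw : r * ‖Complex.polarCoord.symm (r, θ)‖ ^ (-2 + 2*ε) = r ^ (2*ε-1) := by
        rw [hnorm, mul_comm, ← Real.rpow_add_one (ne_of_gt hr0)]
        congr 1
        ring
      have hkey := key hf θ hr0 hr1
      have hrp : (0:ℝ) ≤ r ^ (2*ε-1) := Real.rpow_nonneg hr0.le _
      have hlog : r ^ (2*ε-1) * (1 - Real.log r) ≤ 1/ε * r ^ (ε-1) + r ^ (2*ε-1) := by
        have h1 : -Real.log r ≤ r ^ (-ε) / ε := by
          have h2 := Real.log_le_rpow_div (le_of_lt (inv_pos.mpr hr0)) hε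
          rw [Real.log_inv, Real.inv_rpow hr0.le, ← Real.rpow_neg hr0.le] at h2
          exact h2
        have h3 : r ^ (2*ε-1) * (-Real.log r) ≤ r ^ (2*ε-1) * (r ^ (-ε) / ε) :=
          mul_le_mul_of_nonneg_left h1 hrp
        have h4 : r ^ (2*ε-1) * r ^ (-ε) = r ^ (ε-1) := by
          rw [← Real.rpow_add hr0]
          congr 1
          ring
        have h5 : r ^ (2*ε-1) * (r ^ (-ε) / ε) = 1/ε * r ^ (ε-1) := by
          rw [← h4]
          ring
        nlinarith
      calc r • (‖Complex.polarCoord.symm (r, θ)‖ ^ (-2 + 2*ε)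
            * (f (Complex.polarCoord.symm (r, θ)))^2)
          = (r * ‖Complex.polarCoord.symm (r, θ)‖ ^ (-2 + 2*ε)) * (F f r θ)^2 := by
            rw [smul_eq_mul, hFval]; ring
        _ = r ^ (2*ε-1) * (F f r θ)^2 := by rw [hw]
        _ ≤ r ^ (2*ε-1) * (8 * Aa f θ + (2 * (1 - Real.log r)) * Hh f θ) :=
            mul_le_mul_of_nonneg_left hkey hrp
        _ = 8 * r ^ (2*ε-1) * Aa f θ + 2 * (r ^ (2*ε-1) * (1 - Real.log r)) * Hh f θ := by
            ring
        _ ≤ 8 * r ^ (2*ε-1) * Aa f θ + 2 * (1/ε * r ^ (ε-1) + r ^ (2*ε-1)) * Hh f θ := by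
            have := Hh_nonneg (f := f) θ
            nlinarith
        _ = uA r * Aa f θ + uH r * Hh f θ := by
            rw [huAr, huHr]
            ring
    · have hnmem : Complex.polarCoord.symm (r, θ) ∉ ball (0:ℂ) 1 := by
        rw [mem_ball_zero_iff, hnorm]
        exact fun h => hr1 h
      have hrnIoo : r ∉ Set.Ioo (0:ℝ) 1 := fun h => hr1 h.2
      rw [Set.indicator_of_notMem hnmem, huA, huH, Set.indicator_of_notMem hrnIoo,
        Set.indicator_of_notMem hrnIoo, smul_zero, zero_mul, zero_mul, add_zero]
  -- the comparison of integrals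
  have hcomp : ∫ z in ball (0:ℂ) 1, φ z
      ≤ k1 * (∫ θ in Set.Ioo (-π) π, Aa f θ) + k2 * (∫ θ in Set.Ioo (-π) π, Hh f θ) := by
    rw [hLpolar]
    have hmono : ∫ p in polarCoord.target,
        p.1 • (Set.indicator (ball (0:ℂ) 1) φ) (Complex.polarCoord.symm p)
        ≤ ∫ p in polarCoord.target, (uA p.1 * Aa f p.2 + uH p.1 * Hh f p.2) := by
      apply integral_mono_of_nonneg
      · filter_upwards [ae_restrict_mem polarCoord.open_target.measurableSet] with p hp
        rw [htgt] at hp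
        apply smul_nonneg (le_of_lt (α := ℝ) hp.1)
        apply Set.indicator_nonneg
        intro z _
        rw [hφ]
        positivity
      · exact prod1.add prod2
      · filter_upwards [ae_restrict_mem polarCoord.open_target.measurableSet] with p hp
        exact hle p hp
    refine le_trans hmono (le_of_eq ?_)
    rw [MeasureTheory.integral_add prod1 prod2]
    have e1 : ∫ p in polarCoord.target, uA p.1 * Aa f p.2
        = k1 * ∫ θ in Set.Ioo (-π) π, Aa f θ := by
      rw [hmeq]; exact integral_prod_mul uA (Aa f)
    have e2 : ∫ p in polarCoord.target, uH p.1 * Hh f p.2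
        = k2 * ∫ θ in Set.Ioo (-π) π, Hh f θ := by
      rw [hmeq]; exact integral_prod_mul uH (Hh f)
    rw [e1, e2]
  -- identify the angular integrals with annulus integrals
  set D : ℝ := ∫ z in ball (0:ℂ) 1, ‖fderiv ℝ f z‖ ^ 2 with hD
  set Ann : ℝ := ∫ z in {z : ℂ | 1/2 < ‖z‖ ∧ ‖z‖ < 1}, (f z)^2 with hAnn
  have hSm1 : MeasurableSet {z : ℂ | 1/2 < ‖z‖ ∧ ‖z‖ < 1} :=
    ((isOpen_lt continuous_const continuous_norm).inter
      (isOpen_lt continuous_norm continuous_const)).measurableSet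
  have hD_nn : 0 ≤ D := setIntegral_nonneg measurableSet_ball (fun z _ => by positivity)
  have hAnn_nn : 0 ≤ Ann := setIntegral_nonneg hSm1 (fun z _ => sq_nonneg _)
  have hIH : (∫ θ in Set.Ioo (-π) π, Hh f θ) = D := by
    have hcont : Continuous fun z : ℂ => ‖fderiv ℝ f z‖ ^ 2 :=
      ((hf.continuous_fderiv (by simp)).norm).pow 2
    have hpa := polar_annulus (fun z : ℂ => ‖fderiv ℝ f z‖ ^ 2) hcont
      (le_refl (0:ℝ)) zero_le_one (le_refl (1:ℝ))
    have hae : {z : ℂ | 0 < ‖z‖ ∧ ‖z‖ < 1} =ᵐ[volume] ball (0:ℂ) 1 := by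
      rw [MeasureTheory.ae_eq_set]
      constructor
      · apply measure_mono_null (fun z hz => ?_) (measure_empty)
        exact absurd (mem_ball_zero_iff.mpr hz.1.2) hz.2
      · apply measure_mono_null (fun z hz => ?_) (measure_singleton (0:ℂ))
        have h1 : ¬(0 < ‖z‖ ∧ ‖z‖ < 1) := hz.2
        have h2 : ‖z‖ < 1 := mem_ball_zero_iff.mp hz.1
        have h3 : ¬(0 < ‖z‖) := by tauto
        have h4 : ‖z‖ = 0 := le_antisymm (not_lt.mp h3) (norm_nonneg z)
        simpa [norm_eq_zero] using h4
      
    rw [hD, ← setIntegral_congr_set hae, hpa]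
    apply setIntegral_congr_fun measurableSet_Ioo
    intro θ _
    rfl
  have hIA : (∫ θ in Set.Ioo (-π) π, Aa f θ) ≤ 2 * Ann := by
    have hcont : Continuous fun z : ℂ => (f z)^2 := (hf.continuous).pow 2
    have hpa := polar_annulus (fun z : ℂ => (f z)^2) hcont
      (by norm_num : (0:ℝ) ≤ 1/2) (by norm_num : (1/2:ℝ) ≤ 1) (le_refl (1:ℝ))
    have hAnnIn : Ann = ∫ θ in Set.Ioo (-π) π, In f θ := by
      rw [hAnn, hpa]
      apply setIntegral_congr_fun measurableSet_Ioo
      intro θ _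
      rfl
    have hpt : ∀ θ ∈ Set.Ioo (-π) π, Aa f θ ≤ 2 * In f θ := by
      intro θ _
      have hFc : Continuous fun s : ℝ => F f s θ := cont_F1 hf θ
      have hsub : (∫ s in (1/2:ℝ)..(3/4), s * (F f s θ)^2) ≤ In f θ := by
        apply intervalIntegral.integral_mono_interval (le_refl (1/2:ℝ)) (by norm_num)
          (by norm_num)
        · filter_upwards [ae_restrict_mem measurableSet_Ioc] with t ht
          exact mul_nonneg (le_trans (by norm_num) ht.1.le) (sq_nonneg _)
        · exact (continuous_id.mul (hFc.pow 2)).intervalIntegrable _ _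
      have : Aa f θ = 2 * ∫ s in (1/2:ℝ)..(3/4), s * (F f s θ)^2 := by
        rw [Aa, ← intervalIntegral.integral_const_mul]
      rw [this]
      linarith
    calc (∫ θ in Set.Ioo (-π) π, Aa f θ) ≤ ∫ θ in Set.Ioo (-π) π, 2 * In f θ := by
          apply setIntegral_mono_on intAa (intIn.const_mul 2) measurableSet_Ioo hpt
      _ = 2 * ∫ θ in Set.Ioo (-π) π, In f θ := by rw [MeasureTheory.integral_const_mul]
      _ = 2 * Ann := by rw [hAnnIn]
  -- conclusion
  have hfinal := hcomp
  rw [hIH] at hfinal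
  have h1 : k1 * (∫ θ in Set.Ioo (-π) π, Aa f θ) ≤ k1 * (2 * Ann) :=
    mul_le_mul_of_nonneg_left hIA hk1
  calc (∫ z in ball (0:ℂ) 1, ‖z‖ ^ (-2 + 2*ε) * (f z)^2) = ∫ z in ball (0:ℂ) 1, φ z := rfl
    _ ≤ k1 * (∫ θ in Set.Ioo (-π) π, Aa f θ) + k2 * D := hfinal
    _ ≤ k1 * (2 * Ann) + k2 * D := by linarith
    _ ≤ c * (D + Ann) := by
        rw [hcdef]
        nlinarith
end

section
/- Let A_n be a semisimple r×r complex matrix and let A_{n-1},…,A₁ be arbitrary r×r complex matrices, and consider the meromorphic connection d + A_n dz/z^n + ⋯ + A₁ dz/z + (holomorphic terms) on the trivial rank-r bundle over a disk Δ. Then there exists a holomorphic map u : Δ → 𝔤𝔩_r(ℂ) with u(0) = 0 such that the gauge transformation e^u transforms this connection, modulo holomorphic terms, into a connection d + A_n dz/z^n + A'_{n-1} dz/z^{n-1} + ⋯ + A'₁ dz/z + (holomorphic terms) with [A_n, A'_i] = 0 for all i. -/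
open Metric

noncomputable section GaugeAux

open NormedSpace Finset

attribute [local instance] Matrix.linftyOpNormedRing Matrix.linftyOpNormedAlgebra

variable {r : ℕ}

/-- Entry of a matrix is bounded by the `L∞`-operator norm. -/
private lemma entry_norm_le (M : Matrix (Fin r) (Fin r) ℂ) (i j : Fin r) : ‖M i j‖ ≤ ‖M‖ := by
  have h1 : ‖M i j‖₊ ≤ ∑ j' : Fin r, ‖M i j'‖₊ :=
    Finset.single_le_sum (f := fun j' => ‖M i j'‖₊) (fun _ _ => zero_le) (Finset.mem_univ j)
  have h2 : (∑ j' : Fin r, ‖M i j'‖₊) ≤ (Finset.univ : Finset (Fin r)).sup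
      fun i : Fin r => ∑ j' : Fin r, ‖M i j'‖₊ :=
    Finset.le_sup (f := fun i : Fin r => ∑ j' : Fin r, ‖M i j'‖₊) (Finset.mem_univ i)
  have := Matrix.linfty_opNNNorm_def M
  have h3 : ‖M i j‖₊ ≤ ‖M‖₊ := by rw [this]; exact h1.trans h2
  exact_mod_cast h3

private lemma entry_diff {f : ℂ → Matrix (Fin r) (Fin r) ℂ} (hf : Differentiable ℂ f)
    (i j : Fin r) : Differentiable ℂ fun z => f z i j := by
  let e : Matrix (Fin r) (Fin r) ℂ →ₗ[ℂ] ℂ :=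
    { toFun := fun M => M i j
      map_add' := fun _ _ => rfl
      map_smul' := fun _ _ => rfl }
  exact (e.toContinuousLinearMap.differentiable).comp hf

private lemma dslope_diff {f : ℂ → ℂ} (hf : Differentiable ℂ f) :
    Differentiable ℂ (dslope f 0) := by
  intro b
  rcases eq_or_ne b 0 with rfl | hb
  · obtain ⟨p, hp⟩ := hf.analyticAt 0
    exact hp.has_fpower_series_dslope_fslope.analyticAt.differentiableAt
  · exact (differentiableAt_dslope_of_ne hb).mpr (hf b)

/-- A scalar entire function that is `O(z^N)` near `0` is divisible by `z^N`. -/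
private lemma peel (N : ℕ) : ∀ (f : ℂ → ℂ) (C : ℝ), Differentiable ℂ f →
    (∀ z : ℂ, z ≠ 0 → ‖z‖ ≤ 1 → ‖f z‖ ≤ C * ‖z‖ ^ N) →
    ∃ g : ℂ → ℂ, Differentiable ℂ g ∧ ∀ z, f z = z ^ N * g z := by
  induction N with
  | zero => exact fun f C hf _ => ⟨f, hf, fun z => by simp⟩
  | succ N ih =>
    intro f C hf hb
    have h0 : f 0 = 0 := by
      have hlim : Filter.Tendsto f (nhdsWithin (0:ℂ) {0}ᶜ) (nhds 0) := by
        have hev : ∀ᶠ z in nhdsWithin (0:ℂ) {0}ᶜ, ‖f z‖ ≤ C * ‖z‖ ^ (N+1) := by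
          filter_upwards [self_mem_nhdsWithin,
            Filter.eventually_iff_exists_mem.mpr ⟨_, nhdsWithin_le_nhds
              (Metric.ball_mem_nhds (0:ℂ) one_pos),
              fun y hy => le_of_lt (by simpa using hy)⟩] with z hz h1
          exact hb z hz h1
        have ht : Filter.Tendsto (fun z : ℂ => C * ‖z‖ ^ (N+1)) (nhdsWithin (0:ℂ) {0}ᶜ)
            (nhds 0) := by
          have : Filter.Tendsto (fun z : ℂ => C * ‖z‖ ^ (N+1)) (nhds 0)
              (nhds (C * ‖(0:ℂ)‖ ^ (N+1))) :=
            (continuous_const.mul ((continuous_norm).pow (N+1))).tendsto 0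
          simpa using this.mono_left nhdsWithin_le_nhds
        exact squeeze_zero_norm' hev ht
      have hcont : Filter.Tendsto f (nhdsWithin (0:ℂ) {0}ᶜ) (nhds (f 0)) :=
        (hf.continuous.continuousAt).continuousWithinAt
      exact tendsto_nhds_unique hcont hlim
    set f1 := dslope f 0 with hf1def
    have hdiff : Differentiable ℂ f1 := dslope_diff hf
    have hid : ∀ z : ℂ, f z = z * f1 z := by
      intro z
      have := sub_smul_dslope f 0 z
      rw [sub_zero, h0, sub_zero, smul_eq_mul] at this
      exact this.symm
    have hb1 : ∀ z : ℂ, z ≠ 0 → ‖z‖ ≤ 1 → ‖f1 z‖ ≤ C * ‖z‖ ^ N := by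
      intro z hz h1
      have h2 := hb z hz h1
      rw [hid z, norm_mul] at h2
      have hz0 : (0:ℝ) < ‖z‖ := norm_pos_iff.mpr hz
      have : ‖z‖ * ‖f1 z‖ ≤ ‖z‖ * (C * ‖z‖ ^ N) := by
        calc ‖z‖ * ‖f1 z‖ ≤ C * ‖z‖ ^ (N+1) := h2
          _ = ‖z‖ * (C * ‖z‖ ^ N) := by ring
      exact le_of_mul_le_mul_left this hz0
    obtain ⟨g, hg, hgid⟩ := ih f1 C hdiff hb1
    exact ⟨g, hg, fun z => by rw [hid z, hgid z, pow_succ]; ring⟩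

/-- Entrywise version: peel off the constant coefficient of an entrywise-entire
matrix-valued function. -/
private lemma peel_const (f : ℂ → Matrix (Fin r) (Fin r) ℂ)
    (hf : ∀ i j, Differentiable ℂ fun z => f z i j) :
    ∃ f₁ : ℂ → Matrix (Fin r) (Fin r) ℂ,
      (∀ i j, Differentiable ℂ fun z => f₁ z i j) ∧ ∀ z, f z = f 0 + z • f₁ z := by
  refine ⟨fun z => Matrix.of fun i j => dslope (fun w => f w i j) 0 z,
    fun i j => dslope_diff (hf i j), fun z => ?_⟩
  ext i j
  have := sub_smul_dslope (fun w => f w i j) 0 z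
  rw [sub_zero, smul_eq_mul] at this
  simp only [Matrix.add_apply, Matrix.smul_apply, Matrix.of_apply, smul_eq_mul]
  linear_combination -this

private lemma pow_mul_norm (x : Matrix (Fin r) (Fin r) ℂ) (Mb : ℝ) (hx : ‖x‖ ≤ Mb) :
    ∀ (p : ℕ) (w : Matrix (Fin r) (Fin r) ℂ), ‖x ^ p * w‖ ≤ Mb ^ p * ‖w‖ := by
  have hMb : 0 ≤ Mb := le_trans (norm_nonneg x) hx
  intro p
  induction p with
  | zero => simp
  | succ p ih =>
    intro w
    rw [show x ^ (p+1) * w = x * (x ^ p * w) from by rw [pow_succ', mul_assoc]]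
    calc ‖x * (x ^ p * w)‖ ≤ ‖x‖ * ‖x ^ p * w‖ := norm_mul_le _ _
      _ ≤ Mb * (Mb ^ p * ‖w‖) := by
          apply mul_le_mul hx (ih w) (norm_nonneg _) hMb
      _ = Mb ^ (p+1) * ‖w‖ := by ring

private lemma pow_diff_norm (x y : Matrix (Fin r) (Fin r) ℂ) (Mb : ℝ)
    (hx : ‖x‖ ≤ Mb) (hy : ‖y‖ ≤ Mb) :
    ∀ p : ℕ, ‖x ^ (p+1) - y ^ (p+1)‖ ≤ (p+1) * Mb ^ p * ‖x - y‖ := by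
  have hMb : 0 ≤ Mb := le_trans (norm_nonneg x) hx
  intro p
  induction p with
  | zero => simp
  | succ p ih =>
    have key : x ^ (p+2) - y ^ (p+2) = x ^ (p+1) * (x - y) + (x ^ (p+1) - y ^ (p+1)) * y := by
      have h1 : x ^ (p+2) = x ^ (p+1) * x := pow_succ x (p+1)
      have h2 : y ^ (p+2) = y ^ (p+1) * y := pow_succ y (p+1)
      rw [h1, h2, mul_sub, sub_mul]
      abel
    rw [key]
    calc ‖x ^ (p+1) * (x - y) + (x ^ (p+1) - y ^ (p+1)) * y‖
        ≤ ‖x ^ (p+1) * (x - y)‖ + ‖(x ^ (p+1) - y ^ (p+1)) * y‖ := norm_add_le _ _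
      _ ≤ Mb ^ (p+1) * ‖x - y‖ + ((p+1) * Mb ^ p * ‖x - y‖) * Mb := by
          gcongr
          · exact pow_mul_norm x Mb hx (p+1) (x - y)
          · calc ‖(x ^ (p+1) - y ^ (p+1)) * y‖ ≤ ‖x ^ (p+1) - y ^ (p+1)‖ * ‖y‖ := norm_mul_le _ _
              _ ≤ ((p+1) * Mb ^ p * ‖x - y‖) * Mb := by
                  apply mul_le_mul ih hy (norm_nonneg y)
                  positivity
      _ = ((p+1:ℕ)+1) * Mb ^ (p+1) * ‖x - y‖ := by push_cast; ring

private lemma exp_diff_bound (x y : Matrix (Fin r) (Fin r) ℂ) (Mb c : ℝ)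
    (hMc : Mb ≤ c) (hx : ‖x‖ ≤ Mb) (hy : ‖y‖ ≤ Mb) :
    ‖exp x - exp y - (x - y)‖ ≤ ‖x - y‖ * Mb * (∑' m : ℕ, c ^ m / (Nat.factorial m)) := by
  have hMb : 0 ≤ Mb := le_trans (norm_nonneg x) hx
  have hc : 0 ≤ c := hMb.trans hMc
  set a : ℕ → Matrix (Fin r) (Fin r) ℂ :=
    fun m => ((Nat.factorial m : ℂ))⁻¹ • (x ^ m - y ^ m) with ha_def
  have hsx : Summable fun m : ℕ => ((Nat.factorial m : ℂ))⁻¹ • x ^ m := expSeries_summable' x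
  have hsy : Summable fun m : ℕ => ((Nat.factorial m : ℂ))⁻¹ • y ^ m := expSeries_summable' y
  have ha : Summable a := by
    have := hsx.sub hsy
    simpa [ha_def, smul_sub] using this
  have hdiff : exp x - exp y = ∑' m, a m := by
    have h9 : (∑' m : ℕ, ((Nat.factorial m : ℂ))⁻¹ • x ^ m)
        - (∑' m : ℕ, ((Nat.factorial m : ℂ))⁻¹ • y ^ m) = ∑' m, a m := by
      rw [← (hsx.hasSum.sub hsy.hasSum).tsum_eq]
      congr 1
      funext m
      simp [ha_def, smul_sub]
    rw [exp_eq_tsum (𝕂 := ℂ)]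
    exact h9
  have ha0 : a 0 = 0 := by simp [ha_def]
  have ha1 : a 1 = x - y := by simp [ha_def]
  have hsplit : ∑' m, a m = a 0 + (a 1 + ∑' m, a (m + 1 + 1)) := by
    rw [ha.tsum_eq_zero_add, ((summable_nat_add_iff 1).mpr ha).tsum_eq_zero_add]
  have hkey : exp x - exp y - (x - y) = ∑' m, a (m + 2) := by
    rw [hdiff, hsplit, ha0, ha1, zero_add, add_sub_cancel_left]
  -- bound each term
  have hbound : ∀ m : ℕ, ‖a (m + 2)‖ ≤ ‖x - y‖ * Mb * (c ^ m / (Nat.factorial m)) := by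
    intro m
    have h1 : ‖a (m+2)‖ = ((Nat.factorial (m+2) : ℝ))⁻¹ * ‖x ^ (m+2) - y ^ (m+2)‖ := by
      rw [ha_def]
      rw [norm_smul, norm_inv, Complex.norm_natCast]
    have h2 : ‖x ^ (m+2) - y ^ (m+2)‖ ≤ ((m+2 : ℕ) : ℝ) * Mb ^ (m+1) * ‖x - y‖ := by
      have h2' := pow_diff_norm x y Mb hx hy (m+1)
      push_cast at h2' ⊢
      have hcc : ((m:ℝ)+1+1) = ((m:ℝ)+2) := by ring
      rw [hcc] at h2'
      exact h2'
    have hfact_pos : (0:ℝ) < (Nat.factorial (m+2) : ℝ) := by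
      exact_mod_cast Nat.factorial_pos (m+2)
    have h3 : ‖a (m+2)‖ ≤ ((Nat.factorial (m+2) : ℝ))⁻¹
        * (((m+2 : ℕ) : ℝ) * Mb ^ (m+1) * ‖x - y‖) := by
      rw [h1]
      exact mul_le_mul_of_nonneg_left h2 (by positivity)
    have hfact : ((Nat.factorial (m+2) : ℝ))⁻¹ * ((m+2 : ℕ) : ℝ)
        = ((Nat.factorial (m+1) : ℝ))⁻¹ := by
      have h8 : (Nat.factorial (m+2) : ℝ) = ((m+2 : ℕ) : ℝ) * (Nat.factorial (m+1) : ℝ) := by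
        rw [Nat.factorial_succ (m+1)]; push_cast; ring
      have h4 : (0:ℝ) < (Nat.factorial (m+1) : ℝ) := by exact_mod_cast Nat.factorial_pos (m+1)
      have h5 : (0:ℝ) < ((m+2 : ℕ) : ℝ) := by positivity
      rw [h8, mul_inv]
      field_simp
    have hfle : ((Nat.factorial (m+1) : ℝ))⁻¹ ≤ ((Nat.factorial m : ℝ))⁻¹ := by
      have h5 : (0:ℝ) < (Nat.factorial m : ℝ) := by exact_mod_cast Nat.factorial_pos m
      have h6 : (Nat.factorial m : ℝ) ≤ (Nat.factorial (m+1) : ℝ) := by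
        exact_mod_cast Nat.factorial_le (Nat.le_succ m)
      exact inv_anti₀ h5 h6
    calc ‖a (m+2)‖ ≤ ((Nat.factorial (m+2) : ℝ))⁻¹
          * (((m+2 : ℕ) : ℝ) * Mb ^ (m+1) * ‖x - y‖) := h3
      _ = (((Nat.factorial (m+2) : ℝ))⁻¹ * ((m+2 : ℕ) : ℝ)) * Mb ^ (m+1) * ‖x - y‖ := by ring
      _ = ((Nat.factorial (m+1) : ℝ))⁻¹ * Mb ^ (m+1) * ‖x - y‖ := by rw [hfact]
      _ ≤ ((Nat.factorial m : ℝ))⁻¹ * (Mb * c ^ m) * ‖x - y‖ := by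
          have h7 : Mb ^ (m+1) ≤ Mb * c ^ m := by
            rw [pow_succ']
            exact mul_le_mul_of_nonneg_left (pow_le_pow_left₀ hMb hMc m) hMb
          gcongr
      _ = ‖x - y‖ * Mb * (c ^ m / (Nat.factorial m)) := by ring
  have hsum2 : Summable (fun m : ℕ => ‖x - y‖ * Mb * (c ^ m / (Nat.factorial m))) :=
    (Real.summable_pow_div_factorial c).mul_left _
  have hnorm_sum : Summable fun m => ‖a (m+2)‖ :=
    Summable.of_nonneg_of_le (fun m => norm_nonneg _) hbound hsum2
  rw [hkey]
  calc ‖∑' m, a (m+2)‖ ≤ ∑' m, ‖a (m+2)‖ := norm_tsum_le_tsum_norm hnorm_sum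
    _ ≤ ∑' m, ‖x - y‖ * Mb * (c ^ m / (Nat.factorial m)) := Summable.tsum_le_tsum hbound hnorm_sum hsum2
    _ = ‖x - y‖ * Mb * ∑' m, c ^ m / (Nat.factorial m) := by rw [tsum_mul_left]

private lemma exp_expansion (X Y : ℂ → Matrix (Fin r) (Fin r) ℂ) (k : ℕ) (c : ℝ)
    (hX : Differentiable ℂ X) (hY : Differentiable ℂ Y)
    (hXb : ∀ z : ℂ, ‖z‖ ≤ 1 → ‖X z‖ ≤ c * ‖z‖)
    (hYb : ∀ z : ℂ, ‖z‖ ≤ 1 → ‖Y z‖ ≤ c * ‖z‖)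
    (hD : ∀ z : ℂ, ‖z‖ ≤ 1 → ‖X z - Y z‖ ≤ c * ‖z‖ ^ k) :
    ∃ W : ℂ → Matrix (Fin r) (Fin r) ℂ,
      (∀ i j, Differentiable ℂ fun z => W z i j) ∧
      ∀ z : ℂ, exp (X z) = exp (Y z) + (X z - Y z) + z ^ (k+1) • W z := by
  have hc : 0 ≤ c := by
    have h1 := (norm_nonneg (X 1 - Y 1)).trans (hD 1 (by simp))
    simpa using h1
  set K : ℝ := ∑' m : ℕ, c ^ m / (Nat.factorial m) with hK_def
  have hK : 0 ≤ K := tsum_nonneg fun m => by positivity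
  set E : ℂ → Matrix (Fin r) (Fin r) ℂ :=
    fun z => exp (X z) - exp (Y z) - (X z - Y z) with hE_def
  have hexpX : Differentiable ℂ fun z => exp (X z) :=
    fun z => ((exp_analytic (X z)).differentiableAt).comp z (hX z)
  have hexpY : Differentiable ℂ fun z => exp (Y z) :=
    fun z => ((exp_analytic (Y z)).differentiableAt).comp z (hY z)
  have hEdiff : Differentiable ℂ E := (hexpX.sub hexpY).sub (hX.sub hY)
  have hEb : ∀ z : ℂ, z ≠ 0 → ‖z‖ ≤ 1 → ‖E z‖ ≤ (c * c * K) * ‖z‖ ^ (k+1) := by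
    intro z _ h1
    have hb := exp_diff_bound (X z) (Y z) (c * ‖z‖) c
      (mul_le_of_le_one_right hc h1) (hXb z h1) (hYb z h1)
    calc ‖E z‖ ≤ ‖X z - Y z‖ * (c * ‖z‖) * K := hb
      _ ≤ (c * ‖z‖ ^ k) * (c * ‖z‖) * K := by
          have := hD z h1
          gcongr
      _ = (c * c * K) * ‖z‖ ^ (k+1) := by ring
  have hpeel : ∀ i j : Fin r, ∃ g : ℂ → ℂ, Differentiable ℂ g ∧
      ∀ z : ℂ, E z i j = z ^ (k+1) * g z := by
    intro i j
    apply peel (k+1) (fun z => E z i j) (c * c * K) (entry_diff hEdiff i j)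
    intro z hz h1
    exact (entry_norm_le (E z) i j).trans (hEb z hz h1)
  choose W hW1 hW2 using hpeel
  refine ⟨fun z => Matrix.of fun i j => W i j z, fun i j => hW1 i j, fun z => ?_⟩
  have hEz : E z = z ^ (k+1) • Matrix.of fun i j => W i j z := by
    ext i j
    simpa [Matrix.smul_apply, smul_eq_mul] using hW2 i j z
  have h10 : exp (X z) - (exp (Y z) + (X z - Y z)) =
      z ^ (k+1) • Matrix.of fun i j => W i j z := by
    rw [← hEz, hE_def]
    abel_nf
  have h11 := sub_eq_iff_eq_add.mp h10
  rw [h11]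
  abel

private lemma sol_spec (dd : Fin r → ℂ) (P An : Matrix (Fin r) (Fin r) ℂ) (hP : IsUnit P)
    (hAn : An = P * Matrix.diagonal dd * P⁻¹) (X : Matrix (Fin r) (Fin r) ℂ) :
    ∃ B : Matrix (Fin r) (Fin r) ℂ,
      An * (X + (B * An - An * B)) = (X + (B * An - An * B)) * An := by
  have hdet : IsUnit P.det := (Matrix.isUnit_iff_isUnit_det P).mp hP
  have hPP : P * P⁻¹ = 1 := Matrix.mul_nonsing_inv P hdet
  have hPP' : P⁻¹ * P = 1 := Matrix.nonsing_inv_mul P hdet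
  have hconj : ∀ U V : Matrix (Fin r) (Fin r) ℂ,
      (P * U * P⁻¹) * (P * V * P⁻¹) = P * (U * V) * P⁻¹ := by
    intro U V
    calc (P * U * P⁻¹) * (P * V * P⁻¹) = P * (U * ((P⁻¹ * P) * (V * P⁻¹))) := by
          simp only [Matrix.mul_assoc]
      _ = P * (U * V) * P⁻¹ := by rw [hPP']; simp only [Matrix.one_mul, Matrix.mul_assoc]
  set Y : Matrix (Fin r) (Fin r) ℂ := P⁻¹ * X * P with hY_def
  have hXY : X = P * Y * P⁻¹ := by
    rw [hY_def]
    calc X = (P * P⁻¹) * X * (P * P⁻¹) := by rw [hPP]; simp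
      _ = P * (P⁻¹ * X * P) * P⁻¹ := by simp only [Matrix.mul_assoc]
  set N : Matrix (Fin r) (Fin r) ℂ :=
    Matrix.of fun i j => if dd i = dd j then 0 else Y i j / (dd i - dd j) with hN_def
  set Cm : Matrix (Fin r) (Fin r) ℂ :=
    Y + (N * Matrix.diagonal dd - Matrix.diagonal dd * N) with hCm_def
  have hcomm : Matrix.diagonal dd * Cm = Cm * Matrix.diagonal dd := by
    ext i j
    rw [Matrix.diagonal_mul, Matrix.mul_diagonal]
    have hCm_entry : Cm i j = Y i j + (N i j * dd j - dd i * N i j) := by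
      simp [hCm_def, Matrix.add_apply, Matrix.sub_apply, Matrix.mul_diagonal,
        Matrix.diagonal_mul]
    by_cases hd : dd i = dd j
    · rw [hd, mul_comm]
    · have hNij : N i j = Y i j / (dd i - dd j) := by simp [hN_def, hd]
      have hzero : Cm i j = 0 := by
        rw [hCm_entry, hNij]
        field_simp [sub_ne_zero.mpr hd]
        ring
      rw [hzero]
      ring
  refine ⟨P * N * P⁻¹, ?_⟩
  have hBA : (P * N * P⁻¹) * An - An * (P * N * P⁻¹)
      = P * (N * Matrix.diagonal dd - Matrix.diagonal dd * N) * P⁻¹ := by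
    rw [hAn, hconj, hconj, Matrix.mul_sub, Matrix.sub_mul]
  have hsum : X + ((P * N * P⁻¹) * An - An * (P * N * P⁻¹)) = P * Cm * P⁻¹ := by
    rw [hBA, hXY, hCm_def, Matrix.mul_add, Matrix.add_mul]
  rw [hsum, hAn, hconj, hconj, hcomm]

private def Umap (n : ℕ) (b : ℕ → Matrix (Fin r) (Fin r) ℂ) (z : ℂ) :
    Matrix (Fin r) (Fin r) ℂ :=
  ∑ j ∈ Finset.Icc 1 (n-1), z ^ j • b j

private def Qmap (n : ℕ) (A : ℕ → Matrix (Fin r) (Fin r) ℂ) (z : ℂ) :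
    Matrix (Fin r) (Fin r) ℂ :=
  ∑ i ∈ Finset.Icc 1 n, z ^ (n-i) • A i

private def Qtail (n : ℕ) (A : ℕ → Matrix (Fin r) (Fin r) ℂ) (z : ℂ) :
    Matrix (Fin r) (Fin r) ℂ :=
  ∑ i ∈ Finset.Icc 1 (n-1), z ^ (n-i-1) • A i

private lemma Umap_diff (n : ℕ) (b : ℕ → Matrix (Fin r) (Fin r) ℂ) :
    Differentiable ℂ (Umap n b) := by
  apply Differentiable.fun_sum
  intro j _
  exact (differentiable_pow j).smul_const (b j)

private lemma Qmap_diff (n : ℕ) (A : ℕ → Matrix (Fin r) (Fin r) ℂ) :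
    Differentiable ℂ (Qmap n A) := by
  apply Differentiable.fun_sum
  intro j _
  exact (differentiable_pow (n-j)).smul_const (A j)

private lemma Qtail_diff (n : ℕ) (A : ℕ → Matrix (Fin r) (Fin r) ℂ) :
    Differentiable ℂ (Qtail n A) := by
  apply Differentiable.fun_sum
  intro j _
  exact (differentiable_pow (n-j-1)).smul_const (A j)

private lemma Umap_zero (n : ℕ) (b : ℕ → Matrix (Fin r) (Fin r) ℂ) : Umap n b 0 = 0 := by
  apply Finset.sum_eq_zero
  intro j hj
  have h1 := (Finset.mem_Icc.mp hj).1
  rw [zero_pow (by omega), zero_smul]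

private lemma Umap_norm (n : ℕ) (b : ℕ → Matrix (Fin r) (Fin r) ℂ) (z : ℂ) (hz : ‖z‖ ≤ 1) :
    ‖Umap n b z‖ ≤ (∑ j ∈ Finset.Icc 1 (n-1), ‖b j‖) * ‖z‖ := by
  calc ‖Umap n b z‖ ≤ ∑ j ∈ Finset.Icc 1 (n-1), ‖z ^ j • b j‖ := norm_sum_le _ _
    _ ≤ ∑ j ∈ Finset.Icc 1 (n-1), ‖b j‖ * ‖z‖ := by
        apply Finset.sum_le_sum
        intro j hj
        have h1 := (Finset.mem_Icc.mp hj).1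
        rw [norm_smul, norm_pow]
        calc ‖z‖ ^ j * ‖b j‖ ≤ ‖z‖ ^ 1 * ‖b j‖ := by
              apply mul_le_mul_of_nonneg_right _ (norm_nonneg _)
              exact pow_le_pow_of_le_one (norm_nonneg z) hz h1
          _ = ‖b j‖ * ‖z‖ := by rw [pow_one]; ring
    _ = (∑ j ∈ Finset.Icc 1 (n-1), ‖b j‖) * ‖z‖ := by rw [Finset.sum_mul]

private lemma Qsplit (n : ℕ) (hn : 1 ≤ n) (A : ℕ → Matrix (Fin r) (Fin r) ℂ) (z : ℂ) :
    Qmap n A z = A n + z • Qtail n A z := by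
  unfold Qmap Qtail
  have h1 : Finset.Icc 1 n = insert n (Finset.Icc 1 (n-1)) := by
    ext x
    simp only [Finset.mem_Icc, Finset.mem_insert]
    omega
  rw [h1, Finset.sum_insert (by simp only [Finset.mem_Icc]; omega)]
  rw [Nat.sub_self, pow_zero, one_smul, Finset.smul_sum]
  congr 1
  apply Finset.sum_congr rfl
  intro i hi
  have hi' := (Finset.mem_Icc.mp hi).2
  have h2 : z ^ (n - i) = z * z ^ (n - i - 1) := by
    conv_lhs => rw [show n - i = (n-i-1)+1 from by omega]
    rw [pow_succ']
  rw [smul_smul, ← h2]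

private lemma ediff_mul {f g : ℂ → Matrix (Fin r) (Fin r) ℂ}
    (hf : ∀ i j, Differentiable ℂ fun z => f z i j)
    (hg : ∀ i j, Differentiable ℂ fun z => g z i j) :
    ∀ i j, Differentiable ℂ fun z => (f z * g z) i j := by
  intro i j
  have hrw : (fun z => (f z * g z) i j) = fun z => ∑ k, f z i k * g z k j := by
    funext z
    rw [Matrix.mul_apply]
  rw [hrw]
  apply Differentiable.fun_sum
  intro k _
  exact (hf i k).mul (hg k j)

private lemma ediff_const (M : Matrix (Fin r) (Fin r) ℂ) :
    ∀ i j, Differentiable ℂ fun _ : ℂ => M i j :=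
  fun _ _ => differentiable_const _

private lemma ediff_add {f g : ℂ → Matrix (Fin r) (Fin r) ℂ}
    (hf : ∀ i j, Differentiable ℂ fun z => f z i j)
    (hg : ∀ i j, Differentiable ℂ fun z => g z i j) :
    ∀ i j, Differentiable ℂ fun z => (f z + g z) i j := by
  intro i j
  simpa [Matrix.add_apply] using (hf i j).fun_add (hg i j)

private lemma ediff_sub {f g : ℂ → Matrix (Fin r) (Fin r) ℂ}
    (hf : ∀ i j, Differentiable ℂ fun z => f z i j)
    (hg : ∀ i j, Differentiable ℂ fun z => g z i j) :
    ∀ i j, Differentiable ℂ fun z => (f z - g z) i j := by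
  intro i j
  simpa [Matrix.sub_apply] using (hf i j).fun_sub (hg i j)

private lemma ediff_smul {c : ℂ → ℂ} {f : ℂ → Matrix (Fin r) (Fin r) ℂ}
    (hc : Differentiable ℂ c)
    (hf : ∀ i j, Differentiable ℂ fun z => f z i j) :
    ∀ i j, Differentiable ℂ fun z => (c z • f z) i j := by
  intro i j
  simpa [Matrix.smul_apply, smul_eq_mul] using hc.fun_mul (hf i j)

private lemma mul3_expand (e q e' d₁ d₂ : Matrix (Fin r) (Fin r) ℂ) :
    (e + d₁) * q * (e' + d₂)
      = e * q * e' + (d₁ * q * e' + e * q * d₂ + d₁ * q * d₂) := by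
  rw [add_mul e d₁ q, add_mul, mul_add, mul_add]
  abel

set_option maxHeartbeats 1000000 in
private lemma main_induction (n : ℕ) (hn : 1 ≤ n) (A : ℕ → Matrix (Fin r) (Fin r) ℂ)
    (dd : Fin r → ℂ) (P : Matrix (Fin r) (Fin r) ℂ) (hP : IsUnit P)
    (hAn : A n = P * Matrix.diagonal dd * P⁻¹) :
    ∀ m : ℕ, m ≤ n - 1 → ∃ (b C : ℕ → Matrix (Fin r) (Fin r) ℂ)
      (G : ℂ → Matrix (Fin r) (Fin r) ℂ),
      (∀ i j, Differentiable ℂ fun z => G z i j) ∧ C 0 = A n ∧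
      (∀ k, 1 ≤ k → k ≤ m → A n * C k = C k * A n) ∧
      ∀ z : ℂ, exp (Umap n b z) * Qmap n A z * exp (-(Umap n b z)) =
        (∑ k ∈ Finset.range (m+1), z ^ k • C k) + z ^ (m+1) • G z := by
  intro m
  induction m with
  | zero =>
    intro _
    refine ⟨fun _ => 0, fun _ => A n, Qtail n A,
      fun i j => entry_diff (Qtail_diff n A) i j, rfl,
      fun k h1 h2 => absurd (h1.trans h2) (by omega), ?_⟩
    intro z
    have hU : Umap n (fun _ => (0 : Matrix (Fin r) (Fin r) ℂ)) z = 0 := by unfold Umap; simp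
    rw [hU, neg_zero, exp_zero, Matrix.one_mul, Matrix.mul_one]
    rw [Qsplit n hn A z]
    simp
  | succ m ih =>
    intro hm1
    obtain ⟨b, C, G, hG, hC0, hCcomm, hFexp⟩ := ih (by omega)
    obtain ⟨G₂, hG₂, hGid⟩ := peel_const G hG
    obtain ⟨B', hB'⟩ := sol_spec dd P (A n) hP hAn (G 0)
    set b' : ℕ → Matrix (Fin r) (Fin r) ℂ
      := Function.update b (m+1) (b (m+1) + B') with hb'_def
    have hmem : (m+1) ∈ Finset.Icc 1 (n-1) := Finset.mem_Icc.mpr ⟨by omega, by omega⟩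
    have hUb' : ∀ z : ℂ, Umap n b' z = Umap n b z + z^(m+1) • B' := by
      intro z
      unfold Umap
      have hterm : ∀ j, z^j • b' j
          = z^j • b j + (if j = m+1 then z^(m+1) • B' else 0) := by
        intro j
        by_cases hj : j = m+1
        · subst hj; rw [hb'_def]; simp [Function.update_self, smul_add]
        · rw [hb'_def]; simp [Function.update_of_ne hj, hj]
      rw [Finset.sum_congr rfl fun j _ => hterm j, Finset.sum_add_distrib,
        Finset.sum_ite_eq' (Finset.Icc 1 (n-1)) (m+1) fun _ => z^(m+1) • B', if_pos hmem]
    set c : ℝ := (∑ j ∈ Finset.Icc 1 (n-1), ‖b j‖)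
      + ((∑ j ∈ Finset.Icc 1 (n-1), ‖b' j‖) + ‖B'‖) with hc_def
    have hsums_nonneg : (0:ℝ) ≤ ∑ j ∈ Finset.Icc 1 (n-1), ‖b j‖ :=
      Finset.sum_nonneg fun _ _ => norm_nonneg _
    have hsums_nonneg' : (0:ℝ) ≤ ∑ j ∈ Finset.Icc 1 (n-1), ‖b' j‖ :=
      Finset.sum_nonneg fun _ _ => norm_nonneg _
    have hbc : (∑ j ∈ Finset.Icc 1 (n-1), ‖b j‖) ≤ c := by
      rw [hc_def]
      have : (0:ℝ) ≤ (∑ j ∈ Finset.Icc 1 (n-1), ‖b' j‖) + ‖B'‖ := by positivity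
      linarith
    have hb'c : (∑ j ∈ Finset.Icc 1 (n-1), ‖b' j‖) ≤ c := by
      rw [hc_def]
      have := norm_nonneg B'
      linarith
    have hB'c : ‖B'‖ ≤ c := by
      rw [hc_def]
      linarith
    have hXb : ∀ z : ℂ, ‖z‖ ≤ 1 → ‖Umap n b' z‖ ≤ c * ‖z‖ := fun z hz =>
      (Umap_norm n b' z hz).trans (mul_le_mul_of_nonneg_right hb'c (norm_nonneg z))
    have hYb : ∀ z : ℂ, ‖z‖ ≤ 1 → ‖Umap n b z‖ ≤ c * ‖z‖ := fun z hz =>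
      (Umap_norm n b z hz).trans (mul_le_mul_of_nonneg_right hbc (norm_nonneg z))
    have hDb : ∀ z : ℂ, ‖z‖ ≤ 1 → ‖Umap n b' z - Umap n b z‖ ≤ c * ‖z‖^(m+1) := by
      intro z _
      rw [hUb' z, add_sub_cancel_left, norm_smul, norm_pow, mul_comm]
      exact mul_le_mul_of_nonneg_right hB'c (by positivity)
    obtain ⟨W₁, hW₁, hW₁id⟩ := exp_expansion (fun z => Umap n b' z) (fun z => Umap n b z)
      (m+1) c (Umap_diff n b') (Umap_diff n b) hXb hYb hDb
    obtain ⟨W₂, hW₂, hW₂id⟩ := exp_expansion (fun z => -(Umap n b' z)) (fun z => -(Umap n b z))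
      (m+1) c (Umap_diff n b').neg (Umap_diff n b).neg
      (fun z hz => by rw [norm_neg]; exact hXb z hz)
      (fun z hz => by rw [norm_neg]; exact hYb z hz)
      (fun z hz => by
        rw [neg_sub_neg, norm_sub_rev]
        exact hDb z hz)
    set E : ℂ → Matrix (Fin r) (Fin r) ℂ := fun z => exp (Umap n b z) with hE_def
    set E' : ℂ → Matrix (Fin r) (Fin r) ℂ := fun z => exp (-(Umap n b z)) with hE'_def
    have hEdiffM : Differentiable ℂ E :=
      fun z => ((exp_analytic (Umap n b z)).differentiableAt).comp z (Umap_diff n b z)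
    have hE'diffM : Differentiable ℂ E' :=
      fun z => ((exp_analytic (-(Umap n b z))).differentiableAt).comp z ((Umap_diff n b).neg z)
    have hE0 : E 0 = 1 := by rw [hE_def]; simp only [Umap_zero]; exact exp_zero
    have hE'0 : E' 0 = 1 := by rw [hE'_def]; simp only [Umap_zero, neg_zero]; exact exp_zero
    -- the commutator-generating function
    set Φ : ℂ → Matrix (Fin r) (Fin r) ℂ :=
      fun w => B' * Qmap n A w * E' w - E w * Qmap n A w * B' with hΦ_def
    have hΦdiff : ∀ i j, Differentiable ℂ fun z => Φ z i j :=
      ediff_sub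
        (ediff_mul (ediff_mul (ediff_const B') (entry_diff (Qmap_diff n A)))
          (entry_diff hE'diffM))
        (ediff_mul (ediff_mul (entry_diff hEdiffM) (entry_diff (Qmap_diff n A)))
          (ediff_const B'))
    obtain ⟨Φ₂, hΦ₂, hΦid⟩ := peel_const Φ hΦdiff
    have hQ0 : Qmap n A 0 = A n := by
      rw [Qsplit n hn A 0, zero_smul, add_zero]
    have hΦ0 : Φ 0 = B' * A n - A n * B' := by
      rw [hΦ_def]
      simp only [hQ0, hE0, hE'0, Matrix.mul_one, Matrix.one_mul]
    have hΦeq : ∀ w : ℂ, B' * Qmap n A w * E' w - E w * Qmap n A w * B'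
        = (B' * A n - A n * B') + w • Φ₂ w := by
      intro w
      have := hΦid w
      rw [hΦ0] at this
      exact this
    -- final data
    refine ⟨b', fun k => if k = m+1 then G 0 + (B' * A n - A n * B') else C k,
      fun z => G₂ z + (Φ₂ z + W₁ z * Qmap n A z * E' z + E z * Qmap n A z * W₂ z
        + z^m • ((B' + z • W₁ z) * Qmap n A z * (-B' + z • W₂ z))), ?_, ?_, ?_, ?_⟩
    · -- differentiability of the new tail G'
      apply ediff_add hG₂
      apply ediff_add
      apply ediff_add
      · apply ediff_add hΦ₂
        exact ediff_mul (ediff_mul hW₁ (entry_diff (Qmap_diff n A))) (entry_diff hE'diffM)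
      · exact ediff_mul (ediff_mul (entry_diff hEdiffM) (entry_diff (Qmap_diff n A))) hW₂
      · apply ediff_smul (differentiable_pow m)
        apply ediff_mul
        apply ediff_mul
        · exact ediff_add (ediff_const B') (ediff_smul differentiable_id hW₁)
        · exact entry_diff (Qmap_diff n A)
        · exact ediff_add (ediff_const (-B')) (ediff_smul differentiable_id hW₂)
    · simp only []
      rw [if_neg (show ¬(0 = m+1) by omega)]
      exact hC0
    · intro k h1 h2
      simp only []
      by_cases hk : k = m+1
      · rw [if_pos hk]
        exact hB'
      · rw [if_neg hk]
        exact hCcomm k h1 (by omega)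
    · intro z
      have hsub : Umap n b' z - Umap n b z = z^(m+1) • B' := by
        rw [hUb' z]; exact add_sub_cancel_left _ _
      have hL : exp (Umap n b' z)
          = E z + (z^(m+1) • B' + z^(m+2) • W₁ z) := by
        rw [hW₁id z, hsub, add_assoc]
      have hnegsub : -(Umap n b' z) - -(Umap n b z) = -(z^(m+1) • B') := by
        rw [neg_sub_neg, hUb' z, sub_add_cancel_left]
      have hR : exp (-(Umap n b' z))
          = E' z + (-(z^(m+1) • B') + z^(m+2) • W₂ z) := by
        rw [hW₂id z, hnegsub, add_assoc]
      set d₁ : Matrix (Fin r) (Fin r) ℂ := z^(m+1) • B' + z^(m+2) • W₁ z with hd₁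
      set d₂ : Matrix (Fin r) (Fin r) ℂ := -(z^(m+1) • B') + z^(m+2) • W₂ z with hd₂
      have hzz : z^(m+1) * z^(m+1) = z^(m+2) * z^m := by
        rw [← pow_add, ← pow_add]
        congr 1
        omega
      have h1 : d₁ * Qmap n A z * E' z
          = z^(m+1) • (B' * Qmap n A z * E' z) + z^(m+2) • (W₁ z * Qmap n A z * E' z) := by
        rw [hd₁]
        simp only [add_mul, smul_mul_assoc]
      have h2 : E z * Qmap n A z * d₂
          = -(z^(m+1) • (E z * Qmap n A z * B')) + z^(m+2) • (E z * Qmap n A z * W₂ z) := by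
        rw [hd₂]
        simp only [mul_add, mul_neg, mul_smul_comm]
      have hd₁' : d₁ = z^(m+1) • (B' + z • W₁ z) := by
        rw [hd₁, smul_add, smul_smul, ← pow_succ]
      have hd₂' : d₂ = z^(m+1) • (-B' + z • W₂ z) := by
        rw [hd₂, smul_add, smul_smul, ← pow_succ, smul_neg]
      have h3 : d₁ * Qmap n A z * d₂
          = z^(m+2) • (z^m • ((B' + z • W₁ z) * Qmap n A z * (-B' + z • W₂ z))) := by
        rw [hd₁', hd₂', smul_mul_assoc, smul_mul_assoc, mul_smul_comm, smul_smul, hzz,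
          mul_smul]
      have hT : d₁ * Qmap n A z * E' z + E z * Qmap n A z * d₂ + d₁ * Qmap n A z * d₂
          = z^(m+1) • (B' * A n - A n * B')
            + z^(m+2) • (Φ₂ z + W₁ z * Qmap n A z * E' z + E z * Qmap n A z * W₂ z
              + z^m • ((B' + z • W₁ z) * Qmap n A z * (-B' + z • W₂ z))) := by
        rw [h1, h2, h3]
        have h4 : z^(m+1) • (B' * Qmap n A z * E' z) - z^(m+1) • (E z * Qmap n A z * B')
            = z^(m+1) • (B' * A n - A n * B') + z^(m+2) • Φ₂ z := by
          rw [← smul_sub, hΦeq z, smul_add, smul_smul, ← pow_succ]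
        have h5 : z^(m+1) • (B' * Qmap n A z * E' z)
            + z^(m+2) • (W₁ z * Qmap n A z * E' z)
            + (-(z^(m+1) • (E z * Qmap n A z * B')) + z^(m+2) • (E z * Qmap n A z * W₂ z))
            + z^(m+2) • (z^m • ((B' + z • W₁ z) * Qmap n A z * (-B' + z • W₂ z)))
            = (z^(m+1) • (B' * Qmap n A z * E' z) - z^(m+1) • (E z * Qmap n A z * B'))
            + (z^(m+2) • (W₁ z * Qmap n A z * E' z) + z^(m+2) • (E z * Qmap n A z * W₂ z)
            + z^(m+2) • (z^m • ((B' + z • W₁ z) * Qmap n A z * (-B' + z • W₂ z)))) := by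
          abel
        rw [h5, h4]
        simp only [smul_add]
        abel
      have hsum : (∑ k ∈ Finset.range (m+2),
            z ^ k • (if k = m+1 then G 0 + (B' * A n - A n * B') else C k))
          = (∑ k ∈ Finset.range (m+1), z ^ k • C k)
            + z^(m+1) • (G 0 + (B' * A n - A n * B')) := by
        rw [Finset.sum_range_succ, if_pos rfl]
        congr 1
        apply Finset.sum_congr rfl
        intro k hk
        rw [if_neg (by have := Finset.mem_range.mp hk; omega)]
      calc exp (Umap n b' z) * Qmap n A z * exp (-(Umap n b' z))
          = (E z + d₁) * Qmap n A z * (E' z + d₂) := by rw [hL, hR]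
        _ = E z * Qmap n A z * E' z
            + (d₁ * Qmap n A z * E' z + E z * Qmap n A z * d₂ + d₁ * Qmap n A z * d₂) :=
            mul3_expand _ _ _ _ _
        _ = ((∑ k ∈ Finset.range (m+1), z ^ k • C k) + z^(m+1) • G z)
            + (z^(m+1) • (B' * A n - A n * B')
              + z^(m+2) • (Φ₂ z + W₁ z * Qmap n A z * E' z + E z * Qmap n A z * W₂ z
                + z^m • ((B' + z • W₁ z) * Qmap n A z * (-B' + z • W₂ z)))) := by
            rw [hT, ← hFexp z]
        _ = (∑ k ∈ Finset.range (m+2),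
              z ^ k • (if k = m+1 then G 0 + (B' * A n - A n * B') else C k))
            + z^(m+2) • (G₂ z + (Φ₂ z + W₁ z * Qmap n A z * E' z + E z * Qmap n A z * W₂ z
              + z^m • ((B' + z • W₁ z) * Qmap n A z * (-B' + z • W₂ z)))) := by
            rw [hsum, hGid z]
            simp only [smul_add, smul_smul, ← pow_succ]
            abel

private lemma ediffOn_mul {f g : ℂ → Matrix (Fin r) (Fin r) ℂ} {s : Set ℂ}
    (hf : ∀ i j, DifferentiableOn ℂ (fun z => f z i j) s)
    (hg : ∀ i j, DifferentiableOn ℂ (fun z => g z i j) s) :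
    ∀ i j, DifferentiableOn ℂ (fun z => (f z * g z) i j) s := by
  intro i j
  have hrw : (fun z => (f z * g z) i j) = fun z => ∑ k, f z i k * g z k j := by
    funext z
    rw [Matrix.mul_apply]
  rw [hrw]
  apply DifferentiableOn.fun_sum
  intro k _
  exact (hf i k).mul (hg k j)

set_option maxHeartbeats 1000000 in
private lemma gauge_aux (n : ℕ) (hn : 1 ≤ n)
    (A : ℕ → Matrix (Fin r) (Fin r) ℂ)
    (d : Fin r → ℂ) (P : Matrix (Fin r) (Fin r) ℂ) (hP : IsUnit P)
    (hAn : A n = P * Matrix.diagonal d * P⁻¹)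
    (h₀ : ℂ → Matrix (Fin r) (Fin r) ℂ)
    (hh₀ : ∀ i j, AnalyticOnNhd ℂ (fun z => h₀ z i j) (ball (0 : ℂ) 1)) :
    ∃ u : ℂ → Matrix (Fin r) (Fin r) ℂ,
      (∀ i j, AnalyticOnNhd ℂ (fun z => u z i j) (ball (0 : ℂ) 1)) ∧ u 0 = 0 ∧
      ∃ A' : ℕ → Matrix (Fin r) (Fin r) ℂ, A' n = A n ∧
        (∀ i, A n * A' i = A' i * A n) ∧
        ∃ H : ℂ → Matrix (Fin r) (Fin r) ℂ,
          (∀ i j, AnalyticOnNhd ℂ (fun z => H z i j) (ball (0 : ℂ) 1)) ∧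
          ∀ z ∈ ball (0 : ℂ) 1, z ≠ 0 →
            exp (u z)
                * ((∑ i ∈ Finset.Icc 1 n, (z ^ i)⁻¹ • A i) + h₀ z)
                * exp (-(u z))
              - (Matrix.of fun i j =>
                    deriv (fun w => exp (u w) i j) z)
                  * exp (-(u z))
            = (∑ i ∈ Finset.Icc 1 n, (z ^ i)⁻¹ • A' i) + H z := by
  obtain ⟨b, C, G, hG, hC0, hCcomm, hFexp⟩ := main_induction n hn A d P hP hAn (n-1) le_rfl
  have hn' : n - 1 + 1 = n := by omega
  simp only [hn'] at hFexp
  have hexpU : Differentiable ℂ fun z => exp (Umap n b z) :=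
    fun z => ((exp_analytic (Umap n b z)).differentiableAt).comp z (Umap_diff n b z)
  have hexpU' : Differentiable ℂ fun z => exp (-(Umap n b z)) :=
    fun z => ((exp_analytic (-(Umap n b z))).differentiableAt).comp z ((Umap_diff n b).neg z)
  refine ⟨fun z => Umap n b z, ?_, Umap_zero n b, ?_⟩
  · intro i j
    exact ((entry_diff (Umap_diff n b) i j).differentiableOn).analyticOnNhd isOpen_ball
  refine ⟨fun i => if 1 ≤ i ∧ i ≤ n then C (n - i) else A n, ?_, ?_, ?_⟩
  · beta_reduce
    rw [if_pos ⟨hn, le_rfl⟩, Nat.sub_self]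
    exact hC0
  · intro i
    beta_reduce
    by_cases hi : 1 ≤ i ∧ i ≤ n
    · rw [if_pos hi]
      rcases eq_or_lt_of_le hi.2 with heq | hlt
      · rw [heq, Nat.sub_self, hC0]
      · exact hCcomm (n - i) (by omega) (by omega)
    · rw [if_neg hi]
  refine ⟨fun z => exp (Umap n b z) * h₀ z * exp (-(Umap n b z))
      - (Matrix.of fun i j => deriv (fun w => exp (Umap n b w) i j) z)
        * exp (-(Umap n b z)) + G z, ?_, ?_⟩
  · -- analyticity of H on the ball
    intro i j
    have hDm : ∀ i j : Fin r, DifferentiableOn ℂ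
        (fun z => (Matrix.of fun i j => deriv (fun w => exp (Umap n b w) i j) z) i j)
        (ball (0 : ℂ) 1) := by
      intro i j
      have hAnal : AnalyticOnNhd ℂ (fun w => exp (Umap n b w) i j) Set.univ :=
        fun z _ => (entry_diff hexpU i j).analyticAt z
      have := hAnal.deriv
      intro z _
      exact ((this z trivial).differentiableAt).differentiableWithinAt
    have hmain : DifferentiableOn ℂ
        (fun z => (exp (Umap n b z) * h₀ z * exp (-(Umap n b z))
          - (Matrix.of fun i j => deriv (fun w => exp (Umap n b w) i j) z)
            * exp (-(Umap n b z)) + G z) i j) (ball (0 : ℂ) 1) := by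
      have h1 := ediffOn_mul (s := ball (0:ℂ) 1)
        (ediffOn_mul (fun i j => (entry_diff hexpU i j).differentiableOn)
          (fun i j => (hh₀ i j).differentiableOn))
        (fun i j => (entry_diff hexpU' i j).differentiableOn)
      have h2 := ediffOn_mul (s := ball (0:ℂ) 1) hDm
        (fun i j => (entry_diff hexpU' i j).differentiableOn)
      have h3 : ∀ i j, DifferentiableOn ℂ (fun z => G z i j) (ball (0:ℂ) 1) :=
        fun i j => (hG i j).differentiableOn
      have h4 := ((h1 i j).fun_sub (h2 i j)).fun_add (h3 i j)
      exact h4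
    exact hmain.analyticOnNhd isOpen_ball
  · intro z _ hz0
    have hzn : z ^ n ≠ 0 := pow_ne_zero _ hz0
    have hPQ : (∑ i ∈ Finset.Icc 1 n, (z ^ i)⁻¹ • A i) = (z^n)⁻¹ • Qmap n A z := by
      unfold Qmap
      rw [Finset.smul_sum]
      apply Finset.sum_congr rfl
      intro i hi
      obtain ⟨hi1, hi2⟩ := Finset.mem_Icc.mp hi
      rw [smul_smul]
      congr 1
      have h1 : z^(n-i) ≠ 0 := pow_ne_zero _ hz0
      have h2 : z^i ≠ 0 := pow_ne_zero _ hz0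
      field_simp
      rw [← pow_add]
      congr 1
      omega
    have hcore : exp (Umap n b z) * (∑ i ∈ Finset.Icc 1 n, (z ^ i)⁻¹ • A i)
        * exp (-(Umap n b z))
        = (∑ i ∈ Finset.Icc 1 n,
            (z ^ i)⁻¹ • (if 1 ≤ i ∧ i ≤ n then C (n - i) else A n)) + G z := by
      rw [hPQ, mul_smul_comm, smul_mul_assoc, hFexp z, smul_add, Finset.smul_sum]
      have hlast : (z^n)⁻¹ • (z^n • G z) = G z := by
        rw [smul_smul, inv_mul_cancel₀ hzn, one_smul]
      rw [hlast]
      congr 1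
      have hterm : ∀ k ∈ Finset.range n, (z^n)⁻¹ • (z^k • C k)
          = ((z^n)⁻¹ * z^k) • C k := by
        intro k _
        rw [smul_smul]
      rw [Finset.sum_congr rfl hterm]
      apply Finset.sum_bij' (i := fun k _ => n - k) (j := fun i _ => n - i)
      · intro a ha
        have := Finset.mem_range.mp ha
        exact Finset.mem_Icc.mpr ⟨by omega, by omega⟩
      · intro a ha
        obtain ⟨h1, h2⟩ := Finset.mem_Icc.mp ha
        exact Finset.mem_range.mpr (by omega)
      · intro a ha
        have := Finset.mem_range.mp ha
        omega
      · intro a ha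
        obtain ⟨h1, h2⟩ := Finset.mem_Icc.mp ha
        omega
      · intro a ha
        have ha' := Finset.mem_range.mp ha
        rw [if_pos ⟨by omega, by omega⟩, show n - (n - a) = a from by omega]
        congr 1
        have h2 : z^a ≠ 0 := pow_ne_zero _ hz0
        have h3 : z^(n-a) ≠ 0 := pow_ne_zero _ hz0
        field_simp
        rw [← pow_add]
        congr 1
        omega
    calc exp (Umap n b z) * ((∑ i ∈ Finset.Icc 1 n, (z ^ i)⁻¹ • A i) + h₀ z)
          * exp (-(Umap n b z))
        - (Matrix.of fun i j => deriv (fun w => exp (Umap n b w) i j) z)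
          * exp (-(Umap n b z))
        = exp (Umap n b z) * (∑ i ∈ Finset.Icc 1 n, (z ^ i)⁻¹ • A i)
            * exp (-(Umap n b z))
          + (exp (Umap n b z) * h₀ z * exp (-(Umap n b z))
            - (Matrix.of fun i j => deriv (fun w => exp (Umap n b w) i j) z)
              * exp (-(Umap n b z))) := by
          rw [mul_add, add_mul]
          abel
      _ = (∑ i ∈ Finset.Icc 1 n,
            (z ^ i)⁻¹ • (if 1 ≤ i ∧ i ≤ n then C (n - i) else A n))
          + (exp (Umap n b z) * h₀ z * exp (-(Umap n b z))
            - (Matrix.of fun i j => deriv (fun w => exp (Umap n b w) i j) z)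
              * exp (-(Umap n b z)) + G z) := by
          rw [hcore]
          abel

end GaugeAux

/-- If `A_n` is semisimple, a meromorphic connection
`d + A_n dz/z^n + ⋯ + A_1 dz/z + (holomorphic)` on the trivial bundle over the disk
can be gauged, by `e^u` with `u` holomorphic and `u(0) = 0`, into a connection whose
polar coefficients all commute with `A_n`, modulo holomorphic terms. -/
theorem gauge_to_commuting_polar_part (r n : ℕ) (hn : 1 ≤ n)
    (A : ℕ → Matrix (Fin r) (Fin r) ℂ)
    (d : Fin r → ℂ) (P : Matrix (Fin r) (Fin r) ℂ) (hP : IsUnit P)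
    (hAn : A n = P * Matrix.diagonal d * P⁻¹)
    (h₀ : ℂ → Matrix (Fin r) (Fin r) ℂ)
    (hh₀ : ∀ i j, AnalyticOnNhd ℂ (fun z => h₀ z i j) (ball (0 : ℂ) 1)) :
    ∃ u : ℂ → Matrix (Fin r) (Fin r) ℂ,
      (∀ i j, AnalyticOnNhd ℂ (fun z => u z i j) (ball (0 : ℂ) 1)) ∧ u 0 = 0 ∧
      ∃ A' : ℕ → Matrix (Fin r) (Fin r) ℂ, A' n = A n ∧
        (∀ i, A n * A' i = A' i * A n) ∧
        ∃ H : ℂ → Matrix (Fin r) (Fin r) ℂ,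
          (∀ i j, AnalyticOnNhd ℂ (fun z => H z i j) (ball (0 : ℂ) 1)) ∧
          ∀ z ∈ ball (0 : ℂ) 1, z ≠ 0 →
            NormedSpace.exp (u z)
                * ((∑ i ∈ Finset.Icc 1 n, (z ^ i)⁻¹ • A i) + h₀ z)
                * NormedSpace.exp (-(u z))
              - (Matrix.of fun i j =>
                    deriv (fun w => NormedSpace.exp (u w) i j) z)
                  * NormedSpace.exp (-(u z))
            = (∑ i ∈ Finset.Icc 1 n, (z ^ i)⁻¹ • A' i) + H z := by
  exact gauge_aux n hn A d P hP hAn h₀ hh₀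
end
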